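/- arXiv:1609.01630 — 6 statements merged into one kernel-verified Lean document; each statement's English description precedes it below -/
import Mathlib

section
/- Let d ∈ 𝒟 with fundamental unit ε_d = (t_d + u_d√d)/2. Define E(d) = (1/u_d)·(1 − χ_d(2)/2)⁻¹·(1 − χ_d(3)/3)⁻¹, where χ_d is the Kronecker symbol (d/·). Then E(d) ≤ 1 for all d ∈ 𝒟. -/
/-- The set `𝒟` of positive discriminants. -/
def PosDisc : Set ℕ := {d | 0 < d ∧ ¬ IsSquare d ∧ (d % 4 = 0 ∨ d % 4 = 1)}

/-- The Kronecker symbol `(d/2)`: it is `0` for even `d`, `1` if `d ≡ ±1 (mod 8)`, and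
`−1` if `d ≡ ±3 (mod 8)`. -/
def kroneckerTwo (d : ℤ) : ℤ :=
  if d % 2 = 0 then 0 else if d % 8 = 1 ∨ d % 8 = 7 then 1 else -1

instance : Fact (Nat.Prime 3) := ⟨by norm_num⟩

/-- If `d ≡ 1 (mod 8)` and `t² = d u² + 4` with `u > 0`, then `u ≥ 4`. -/
lemma aux_u_ge_four (d t u : ℕ) (hd8 : d % 8 = 1) (hu : 0 < u)
    (hsol : t ^ 2 = d * u ^ 2 + 4) : 4 ≤ u := by
  have hd8' : ((d : ZMod 8)) = 1 := by
    have := ZMod.natCast_mod d 8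
    rw [hd8] at this; exact_mod_cast this.symm
  by_contra h
  interval_cases u
  · -- u = 1
    have hc : ((t : ZMod 8))^2 = 5 := by
      have := congrArg (Nat.cast : ℕ → ZMod 8) hsol
      push_cast at this
      rw [hd8'] at this
      rw [this]; try ring
    exact (by decide : ∀ x : ZMod 8, x^2 ≠ 5) _ hc
  · -- u = 2
    have hd32 : ((d : ZMod 32)) = 8 * ((d / 8 : ℕ) : ZMod 32) + 1 := by
      have hdec : d = 8 * (d / 8) + 1 := by omega
      calc ((d : ZMod 32)) = ((8 * (d / 8) + 1 : ℕ) : ZMod 32) := by rw [← hdec]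
        _ = 8 * ((d / 8 : ℕ) : ZMod 32) + 1 := by push_cast; ring
    have hc : ((t : ZMod 32))^2 = (8 * ((d / 8 : ℕ) : ZMod 32) + 1) * 4 + 4 := by
      have := congrArg (Nat.cast : ℕ → ZMod 32) hsol
      push_cast at this
      rw [hd32] at this
      rw [this]; try ring
    exact (by decide : ∀ x k : ZMod 32, x^2 ≠ (8*k+1)*4+4) _ _ hc
  · -- u = 3
    have hc : ((t : ZMod 8))^2 = 1 * 9 + 4 := by
      have := congrArg (Nat.cast : ℕ → ZMod 8) hsol
      push_cast at this
      rw [hd8'] at this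
      rw [this]; try ring
    exact (by decide : ∀ x : ZMod 8, x^2 ≠ 1 * 9 + 4) _ hc

/-- If `d ≡ 1 (mod 3)` and `t² = d u² + 4` with `u > 0`, then `u ≥ 2`. -/
lemma aux_u_ge_two (d t u : ℕ) (hd3 : d % 3 = 1) (hu : 0 < u)
    (hsol : t ^ 2 = d * u ^ 2 + 4) : 2 ≤ u := by
  have hd3' : ((d : ZMod 3)) = 1 := by
    have := ZMod.natCast_mod d 3
    rw [hd3] at this; exact_mod_cast this.symm
  by_contra h
  interval_cases u
  have hc : ((t : ZMod 3))^2 = 1 + 4 := by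
    have := congrArg (Nat.cast : ℕ → ZMod 3) hsol
    push_cast at this
    rw [hd3'] at this
    rw [this]; try ring
  exact (by decide : ∀ x : ZMod 3, x^2 ≠ 1 + 4) _ hc

/-- For `d ∈ 𝒟` with fundamental unit `ε_d = (t_d + u_d √d)/2`, the quantity
`E(d) = (1/u_d)·(1 − χ_d(2)/2)⁻¹·(1 − χ_d(3)/3)⁻¹` satisfies `E(d) ≤ 1`.  Here
`χ_d(2)` is the Kronecker symbol `(d/2)` and `χ_d(3) = (d/3)` is the Legendre symbol. -/
theorem stmt_3 (d t u : ℕ) (hd : d ∈ PosDisc) (ht : 0 < t) (hu : 0 < u)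
    (hsol : t ^ 2 = d * u ^ 2 + 4)
    (hmin : ∀ t' u' : ℕ, 0 < t' → 0 < u' → t' ^ 2 = d * u' ^ 2 + 4 → t ≤ t') :
    (1 / (u : ℝ)) * (1 - (kroneckerTwo (d : ℤ) : ℝ) / 2)⁻¹ *
      (1 - (legendreSym 3 (d : ℤ) : ℝ) / 3)⁻¹ ≤ 1 := by
  obtain ⟨hd0, hdsq, hd4⟩ := hd
  -- trichotomy for kroneckerTwo
  have hk : kroneckerTwo (d : ℤ) = 0 ∨ (kroneckerTwo (d : ℤ) = 1 ∧ d % 8 = 1) ∨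
      kroneckerTwo (d : ℤ) = -1 := by
    unfold kroneckerTwo
    split_ifs with h1 h2
    · exact Or.inl rfl
    · exact Or.inr (Or.inl ⟨rfl, by omega⟩)
    · exact Or.inr (Or.inr rfl)
  -- trichotomy for legendreSym
  have hl : legendreSym 3 (d : ℤ) = 0 ∨ (legendreSym 3 (d : ℤ) = 1 ∧ d % 3 = 1) ∨
      legendreSym 3 (d : ℤ) = -1 := by
    have hmod : legendreSym 3 (d : ℤ) = legendreSym 3 ((d : ℤ) % 3) := legendreSym.mod 3 _
    have h3 : (d : ℤ) % 3 = ((d % 3 : ℕ) : ℤ) := by omega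
    rcases (show d % 3 = 0 ∨ d % 3 = 1 ∨ d % 3 = 2 by omega) with h | h | h
    · left; rw [hmod, h3, h]; decide
    · right; left; exact ⟨by rw [hmod, h3, h]; decide, h⟩
    · right; right; rw [hmod, h3, h]; decide
  have hu1 : (1 : ℝ) ≤ (u : ℝ) := by exact_mod_cast hu
  have hu0 : (0 : ℝ) < (u : ℝ) := by positivity
  rcases hk with hk | ⟨hk, hd8⟩ | hk <;> rcases hl with hl | ⟨hl, hd3⟩ | hl <;>
    rw [hk, hl] <;> push_cast <;> norm_num
  all_goals
    try have h4 : (4:ℝ) ≤ (u:ℝ) := by exact_mod_cast aux_u_ge_four d t u hd8 hu hsol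
  all_goals
    try have h2 : (2:ℝ) ≤ (u:ℝ) := by exact_mod_cast aux_u_ge_two d t u hd3 hu hsol
  all_goals
    nlinarith [mul_inv_cancel₀ (ne_of_gt hu0), inv_nonneg.2 hu0.le, hu1]
end

section
/- Let x > 2 and let X be the unique real solution of (X + √(X² − 4))/2 = x. Then there is a bijection between the set of pairs (d, n) with d ∈ 𝒟, n ∈ ℕ, and ε_dⁿ ≤ x, and the set of pairs of positive integers (t, u) with 2 < t ≤ X and (t² − 4)/u² ∈ 𝒟, given by ε_dⁿ = (t + u√d)/2. -/
open scoped Classical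

def IsFundSol (d t u : ℕ) : Prop :=
  0 < t ∧ 0 < u ∧ t ^ 2 = d * u ^ 2 + 4 ∧
    ∀ t' u' : ℕ, 0 < t' → 0 < u' → t' ^ 2 = d * u' ^ 2 + 4 → t ≤ t'

noncomputable def eps (d : ℕ) : ℝ :=
  if h : ∃ t u, IsFundSol d t u then
    ((h.choose : ℝ) + (h.choose_spec.choose : ℝ) * Real.sqrt d) / 2
  else 0

namespace Stmt4Aux

open Real

/-- The value `(t + u√d)/2` of a pair. -/
noncomputable def ev (d : ℕ) (p : ℤ × ℤ) : ℝ := ((p.1 : ℝ) + (p.2 : ℝ) * Real.sqrt d) / 2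

/-- The conjugate value `(t - u√d)/2` of a pair. -/
noncomputable def evb (d : ℕ) (p : ℤ × ℤ) : ℝ := ((p.1 : ℝ) - (p.2 : ℝ) * Real.sqrt d) / 2

/-- The increasing function `f(y) = (y + √(y²-4))/2`. -/
noncomputable def pf (y : ℝ) : ℝ := (y + Real.sqrt (y ^ 2 - 4)) / 2

lemma pf_strictMonoOn : StrictMonoOn pf {y : ℝ | 2 ≤ y} := by
  intro a ha b hb hab
  simp only [Set.mem_setOf_eq] at ha hb
  have h1 : Real.sqrt (a ^ 2 - 4) ≤ Real.sqrt (b ^ 2 - 4) := by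
    apply Real.sqrt_le_sqrt; nlinarith
  unfold pf; linarith

lemma pf_le_iff {a b : ℝ} (ha : 2 ≤ a) (hb : 2 ≤ b) : pf a ≤ pf b ↔ a ≤ b := by
  constructor
  · intro h; by_contra hab; push_neg at hab
    exact absurd h (not_le.mpr (pf_strictMonoOn hb ha hab))
  · intro h
    rcases eq_or_lt_of_le h with rfl | h
    · exact le_rfl
    · exact (pf_strictMonoOn ha hb h).le

/-- The sequence with `pseq n = ε^n` in value. -/
def pseq (t0 u0 : ℤ) : ℕ → ℤ × ℤ
  | 0 => (2, 0)
  | 1 => (t0, u0)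
  | n+2 => (t0 * (pseq t0 u0 (n+1)).1 - (pseq t0 u0 n).1,
            t0 * (pseq t0 u0 (n+1)).2 - (pseq t0 u0 n).2)

lemma ev_evb_pseq (d : ℕ) (t0 u0 : ℤ) (heq : t0 ^ 2 = (d : ℤ) * u0 ^ 2 + 4) (n : ℕ) :
    ev d (pseq t0 u0 n) = (ev d (t0, u0)) ^ n ∧
      evb d (pseq t0 u0 n) = (evb d (t0, u0)) ^ n := by
  have hs : Real.sqrt d ^ 2 = (d : ℝ) := Real.sq_sqrt (by positivity)
  have heqR : (t0 : ℝ) ^ 2 = (d : ℝ) * (u0 : ℝ) ^ 2 + 4 := by exact_mod_cast heq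
  have hq : (ev d (t0, u0)) ^ 2 = (t0 : ℝ) * ev d (t0, u0) - 1 := by
    simp only [ev]
    linear_combination ((u0 : ℝ) ^ 2 / 4) * hs - (1 / 4) * heqR
  have hqb : (evb d (t0, u0)) ^ 2 = (t0 : ℝ) * evb d (t0, u0) - 1 := by
    simp only [evb]
    linear_combination ((u0 : ℝ) ^ 2 / 4) * hs - (1 / 4) * heqR
  induction n using Nat.twoStepInduction with
  | zero => simp [pseq, ev, evb]
  | one => simp [pseq]
  | more n ih1 ih2 =>
    have e1 : ev d (pseq t0 u0 (n + 2)) =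
        (t0 : ℝ) * ev d (pseq t0 u0 (n + 1)) - ev d (pseq t0 u0 n) := by
      simp only [pseq, ev]; push_cast; ring
    have e2 : evb d (pseq t0 u0 (n + 2)) =
        (t0 : ℝ) * evb d (pseq t0 u0 (n + 1)) - evb d (pseq t0 u0 n) := by
      simp only [pseq, evb]; push_cast; ring
    constructor
    · rw [e1, ih1.1, ih2.1]
      linear_combination (-(ev d (t0, u0)) ^ n) * hq
    · rw [e2, ih1.2, ih2.2]
      linear_combination (-(evb d (t0, u0)) ^ n) * hqb

lemma conj_mul (d : ℕ) (p : ℤ × ℤ) (h : p.1 ^ 2 = (d : ℤ) * p.2 ^ 2 + 4) :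
    ev d p * evb d p = 1 := by
  have hs : Real.sqrt d ^ 2 = (d : ℝ) := Real.sq_sqrt (by positivity)
  have hR : (p.1 : ℝ) ^ 2 = (d : ℝ) * (p.2 : ℝ) ^ 2 + 4 := by exact_mod_cast h
  simp only [ev, evb]
  linear_combination (-(p.2 : ℝ) ^ 2 / 4) * hs + (1 / 4) * hR

lemma evmul_one (d : ℕ) (t0 u0 : ℤ) (heq : t0 ^ 2 = (d : ℤ) * u0 ^ 2 + 4) (n : ℕ) :
    ev d (pseq t0 u0 n) * evb d (pseq t0 u0 n) = 1 := by
  rw [(ev_evb_pseq d t0 u0 heq n).1, (ev_evb_pseq d t0 u0 heq n).2, ← mul_pow,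
    conj_mul d (t0, u0) heq, one_pow]

lemma norm_of_evmul (d : ℕ) (p : ℤ × ℤ) (h : ev d p * evb d p = 1) :
    p.1 ^ 2 = (d : ℤ) * p.2 ^ 2 + 4 := by
  have hs : Real.sqrt d ^ 2 = (d : ℝ) := Real.sq_sqrt (by positivity)
  have hR : (p.1 : ℝ) ^ 2 = (d : ℝ) * (p.2 : ℝ) ^ 2 + 4 := by
    simp only [ev, evb] at h
    linear_combination 4 * h + (p.2 : ℝ) ^ 2 * hs
  exact_mod_cast hR

lemma pseq_norm (d : ℕ) (t0 u0 : ℤ) (heq : t0 ^ 2 = (d : ℤ) * u0 ^ 2 + 4) (n : ℕ) :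
    (pseq t0 u0 n).1 ^ 2 = (d : ℤ) * (pseq t0 u0 n).2 ^ 2 + 4 :=
  norm_of_evmul d _ (evmul_one d t0 u0 heq n)

lemma pseq_pos (d : ℕ) (hd0 : 0 < d) (t0 u0 : ℤ)
    (heq : t0 ^ 2 = (d : ℤ) * u0 ^ 2 + 4) (hev : 1 < ev d (t0, u0))
    (n : ℕ) (hn : 1 ≤ n) :
    2 < (pseq t0 u0 n).1 ∧ 0 < (pseq t0 u0 n).2 := by
  have hs0 : 0 < Real.sqrt d := Real.sqrt_pos.mpr (by exact_mod_cast hd0)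
  have hA : 1 < ev d (pseq t0 u0 n) := by
    rw [(ev_evb_pseq d t0 u0 heq n).1]
    exact one_lt_pow₀ hev (by omega)
  have hAB : ev d (pseq t0 u0 n) * evb d (pseq t0 u0 n) = 1 := evmul_one d t0 u0 heq n
  have hB0 : 0 < evb d (pseq t0 u0 n) := by
    rcases lt_trichotomy (evb d (pseq t0 u0 n)) 0 with h | h | h
    · nlinarith
    · rw [h, mul_zero] at hAB; norm_num at hAB
    · exact h
  have hB1 : evb d (pseq t0 u0 n) < 1 := by nlinarith
  have hT : ((pseq t0 u0 n).1 : ℝ) = ev d (pseq t0 u0 n) + evb d (pseq t0 u0 n) := by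
    simp only [ev, evb]; ring
  have hU : ((pseq t0 u0 n).2 : ℝ) * Real.sqrt d =
      ev d (pseq t0 u0 n) - evb d (pseq t0 u0 n) := by
    simp only [ev, evb]; ring
  constructor
  · have : (2 : ℝ) < ((pseq t0 u0 n).1 : ℝ) := by rw [hT]; nlinarith
    exact_mod_cast this
  · have : (0 : ℝ) < ((pseq t0 u0 n).2 : ℝ) := by
      have h1 : 0 < ((pseq t0 u0 n).2 : ℝ) * Real.sqrt d := by rw [hU]; nlinarith
      nlinarith [h1, hs0]
    exact_mod_cast this

lemma sol_ev_pf (d : ℕ) (p : ℤ × ℤ) (hp2 : 0 ≤ p.2)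
    (h : p.1 ^ 2 = (d : ℤ) * p.2 ^ 2 + 4) : ev d p = pf ((p.1 : ℝ)) := by
  have hs : Real.sqrt d ^ 2 = (d : ℝ) := Real.sq_sqrt (by positivity)
  have hR : (p.1 : ℝ) ^ 2 = (d : ℝ) * (p.2 : ℝ) ^ 2 + 4 := by exact_mod_cast h
  have hp2R : (0 : ℝ) ≤ (p.2 : ℝ) := by exact_mod_cast hp2
  have key : ((p.1 : ℝ) ^ 2 - 4) = ((p.2 : ℝ) * Real.sqrt d) ^ 2 := by
    linear_combination hR - (p.2 : ℝ) ^ 2 * hs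
  rw [pf, key, Real.sqrt_sq (by positivity)]
  rfl

lemma ev_inj (d : ℕ) (hirr : Irrational (Real.sqrt d)) {p q : ℤ × ℤ}
    (h : ev d p = ev d q) : p = q := by
  simp only [ev] at h
  by_cases hq : p.2 = q.2
  · have hq' : (p.2 : ℝ) = (q.2 : ℝ) := by exact_mod_cast hq
    have h1 : (p.1 : ℝ) = (q.1 : ℝ) := by
      linear_combination 2 * h - Real.sqrt d * hq'
    exact Prod.ext (by exact_mod_cast h1) hq
  · exfalso
    apply hirr
    have hne : ((q.2 - p.2 : ℤ) : ℝ) ≠ 0 := by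
      simp only [ne_eq, Int.cast_eq_zero, sub_eq_zero]
      exact fun hh => hq hh.symm
    refine ⟨((p.1 - q.1 : ℤ) : ℚ) / ((q.2 - p.2 : ℤ) : ℚ), ?_⟩
    push_cast
    rw [div_eq_iff (by push_cast at hne ⊢; exact hne)]
    linear_combination 2 * h

lemma exists_fund (d : ℕ) (hd : d ∈ PosDisc) : ∃ t u, IsFundSol d t u := by
  obtain ⟨hd0, hsq, -⟩ := hd
  obtain ⟨x, y, hxy, hy⟩ := Pell.exists_of_not_isSquare (d := (d : ℤ))
    (by exact_mod_cast hd0) (fun hc => hsq (Int.isSquare_natCast_iff.mp hc))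
  have hx : x ≠ 0 := by
    rintro rfl
    have hy2 : (0 : ℤ) < y ^ 2 := by positivity
    have : (0 : ℤ) < (d : ℤ) := by exact_mod_cast hd0
    nlinarith
  -- a natural-number solution of t² = d u² + 4
  have habs : ∀ z : ℤ, ((z.natAbs : ℤ)) ^ 2 = z ^ 2 := by
    intro z; push_cast; simp [abs_abs, sq_abs]
  have hsol : (2 * x.natAbs) ^ 2 = d * (2 * y.natAbs) ^ 2 + 4 := by
    have : ((2 * x.natAbs : ℕ) : ℤ) ^ 2 = (d : ℤ) * ((2 * y.natAbs : ℕ) : ℤ) ^ 2 + 4 := by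
      push_cast
      have h1 := habs x
      have h2 := habs y
      push_cast at h1 h2
      linear_combination 4 * hxy + 4 * h1 - 4 * (d : ℤ) * h2
    exact_mod_cast this
  have hP : ∃ t : ℕ, 0 < t ∧ ∃ u, 0 < u ∧ t ^ 2 = d * u ^ 2 + 4 := by
    refine ⟨2 * x.natAbs, by positivity, 2 * y.natAbs, by positivity, hsol⟩
  classical
  let t := Nat.find hP
  obtain ⟨ht0, u, hu0, hequ⟩ := Nat.find_spec hP
  refine ⟨t, u, ht0, hu0, hequ, ?_⟩
  intro t' u' ht' hu' heq'
  exact Nat.find_min' hP ⟨ht', u', hu', heq'⟩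

lemma fund_unique {d t u t' u' : ℕ} (hd0 : 0 < d) (h : IsFundSol d t u)
    (h' : IsFundSol d t' u') : t = t' ∧ u = u' := by
  obtain ⟨ht, hu, heq, hmin⟩ := h
  obtain ⟨ht', hu', heq', hmin'⟩ := h'
  have htt : t = t' := le_antisymm (hmin t' u' ht' hu' heq') (hmin' t u ht hu heq)
  subst htt
  have : d * u ^ 2 = d * u' ^ 2 := by omega
  have hu2 : u ^ 2 = u' ^ 2 := Nat.eq_of_mul_eq_mul_left hd0 this
  exact ⟨rfl, Nat.pow_left_injective (by norm_num) hu2⟩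

lemma eps_eq {d t u : ℕ} (hd0 : 0 < d) (h : IsFundSol d t u) :
    eps d = ((t : ℝ) + (u : ℝ) * Real.sqrt d) / 2 := by
  have hex : ∃ t u, IsFundSol d t u := ⟨t, u, h⟩
  rw [eps, dif_pos hex]
  obtain ⟨h1, h2⟩ := fund_unique hd0 hex.choose_spec.choose_spec h
  have hA : (hex.choose : ℝ) = (t : ℝ) := by exact_mod_cast h1
  have hB : (hex.choose_spec.choose : ℝ) = (u : ℝ) := by exact_mod_cast h2
  linear_combination (1 / 2) * hA + (Real.sqrt d / 2) * hB

lemma pseq_surj (d t0 u0 : ℕ) (hd : d ∈ PosDisc) (hfund : IsFundSol d t0 u0) :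
    ∀ a : ℕ, ∀ b : ℕ, 2 < a → 0 < b → a ^ 2 = d * b ^ 2 + 4 →
      ∃ n, 1 ≤ n ∧ pseq (t0 : ℤ) (u0 : ℤ) n = ((a : ℤ), (b : ℤ)) := by
  obtain ⟨hd0, hsq, -⟩ := hd
  obtain ⟨ht0pos, hu0pos, hf, hmin⟩ := hfund
  have hirr : Irrational (Real.sqrt d) := irrational_sqrt_natCast_iff.mpr hsq
  have hs : Real.sqrt d ^ 2 = (d : ℝ) := Real.sq_sqrt (by positivity)
  have hs0 : 0 < Real.sqrt d := Real.sqrt_pos.mpr (by exact_mod_cast hd0)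
  have hfZ : ((t0 : ℤ)) ^ 2 = (d : ℤ) * (u0 : ℤ) ^ 2 + 4 := by exact_mod_cast hf
  have ht02 : 2 < t0 := by
    have h5 : 5 ≤ t0 ^ 2 := by nlinarith [hd0, hu0pos]
    by_contra hc
    push_neg at hc
    have : t0 ^ 2 ≤ 4 := by nlinarith
    omega
  intro a
  induction a using Nat.strong_induction_on with
  | _ a IH =>
    intro b ha hb heqn
    have heqZ : ((a : ℤ)) ^ 2 = (d : ℤ) * (b : ℤ) ^ 2 + 4 := by exact_mod_cast heqn
    have hta : t0 ≤ a := hmin a b (by omega) hb heqn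
    by_cases hat : a = t0
    · have hb2 : b = u0 := by
        subst hat
        have h6 : d * b ^ 2 = d * u0 ^ 2 := by omega
        have h7 := Nat.eq_of_mul_eq_mul_left hd0 h6
        exact Nat.pow_left_injective (by norm_num) h7
      exact ⟨1, le_refl 1, by rw [hat, hb2]; rfl⟩
    · have htlt : t0 < a := lt_of_le_of_ne hta (Ne.symm hat)
      have hblt : u0 < b := by
        by_contra hc
        push_neg at hc
        have h1 : b ^ 2 ≤ u0 ^ 2 := Nat.pow_le_pow_left hc 2
        have h2 : d * b ^ 2 ≤ d * u0 ^ 2 := Nat.mul_le_mul_left d h1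
        have h3 : a ^ 2 ≤ t0 ^ 2 := by omega
        have h4 : a ≤ t0 := by nlinarith
        omega
      -- parity considerations via ZMod 2
      have sq2 : ∀ z : ZMod 2, z ^ 2 = z := by decide
      have cast2 : ∀ m k : ℕ, m ^ 2 = d * k ^ 2 + 4 →
          ((m : ZMod 2)) = (d : ZMod 2) * k := by
        intro m k hmk
        have hcast : ((m : ZMod 2)) ^ 2 = (d : ZMod 2) * (k : ZMod 2) ^ 2 + 4 := by
          exact_mod_cast congrArg (Nat.cast : ℕ → ZMod 2) hmk
        rw [sq2, sq2] at hcast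
        have h40 : (4 : ZMod 2) = 0 := by decide
        rw [h40, add_zero] at hcast
        exact hcast
      have e1 := cast2 a b heqn
      have e2 := cast2 t0 u0 hf
      have dvd1 : (2 : ℤ) ∣ (a : ℤ) * t0 - d * b * u0 := by
        have hz : (((a : ℤ) * t0 - d * b * u0 : ℤ) : ZMod 2) = 0 := by
          push_cast
          rw [e1, e2]
          linear_combination ((b : ZMod 2) * (u0 : ZMod 2)) * sq2 (d : ZMod 2)
        exact (ZMod.intCast_zmod_eq_zero_iff_dvd _ 2).mp hz
      have dvd2 : (2 : ℤ) ∣ (b : ℤ) * t0 - a * u0 := by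
        have hz : (((b : ℤ) * t0 - a * u0 : ℤ) : ZMod 2) = 0 := by
          push_cast
          rw [e1, e2]
          ring
        exact (ZMod.intCast_zmod_eq_zero_iff_dvd _ 2).mp hz
      obtain ⟨t', ht'⟩ := dvd1
      obtain ⟨u', hu'⟩ := dvd2
      have h4 : (2 * t') ^ 2 - (d : ℤ) * (2 * u') ^ 2 = 16 := by
        rw [← ht', ← hu']
        linear_combination ((t0 : ℤ) ^ 2 - d * u0 ^ 2) * heqZ + 4 * hfZ
      have hnorm' : t' ^ 2 = (d : ℤ) * u' ^ 2 + 4 := by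
        have h5 : 4 * t' ^ 2 = 4 * ((d : ℤ) * u' ^ 2 + 4) := by linear_combination h4
        exact mul_left_cancel₀ (by norm_num) h5
      have ht'R : (t' : ℝ) = ((a : ℝ) * t0 - d * b * u0) / 2 := by
        have hcc := congrArg (fun z : ℤ => (z : ℝ)) ht'
        push_cast at hcc
        linarith
      have hu'R : (u' : ℝ) = ((b : ℝ) * t0 - a * u0) / 2 := by
        have hcc := congrArg (fun z : ℤ => (z : ℝ)) hu'
        push_cast at hcc
        linarith
      have hfR : (t0 : ℝ) ^ 2 = (d : ℝ) * u0 ^ 2 + 4 := by exact_mod_cast hf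
      have heqR : (a : ℝ) ^ 2 = (d : ℝ) * b ^ 2 + 4 := by exact_mod_cast heqn
      set s := Real.sqrt d with hsdef
      set α : ℝ := ((a : ℝ) + b * s) / 2 with hα
      set ε : ℝ := ((t0 : ℝ) + u0 * s) / 2 with hε
      set β : ℝ := ((t' : ℝ) + u' * s) / 2 with hβ
      set βb : ℝ := ((t' : ℝ) - u' * s) / 2 with hβb
      set αb : ℝ := ((a : ℝ) - b * s) / 2 with hαb
      clear_value α ε β βb αb
      have hβε : β * ε = α := by
        rw [hβ, hε, hα, ht'R, hu'R]
        linear_combination ((a : ℝ) + b * s) / 8 * hfR +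
          ((b * t0 * u0 - a * u0 ^ 2 : ℝ)) / 8 * hs
      have hαab : α * αb = 1 := by
        rw [hα, hαb]
        linear_combination (1 / 4) * heqR - ((b : ℝ) ^ 2 / 4) * hs
      have hββb : β * βb = 1 := by
        have hnR : (t' : ℝ) ^ 2 = (d : ℝ) * (u' : ℝ) ^ 2 + 4 := by exact_mod_cast hnorm'
        rw [hβ, hβb]
        linear_combination (1 / 4) * hnR - ((u' : ℝ) ^ 2 / 4) * hs
      have hε1 : 1 < ε := by
        rw [hε]
        have h8 : (3 : ℝ) ≤ (t0 : ℝ) := by exact_mod_cast ht02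
        have h9 : (0 : ℝ) < (u0 : ℝ) := by exact_mod_cast hu0pos
        have h10 : 0 < (u0 : ℝ) * s := mul_pos h9 hs0
        linarith
      have hαε : ε < α := by
        rw [hε, hα]
        have h1 : (t0 : ℝ) < a := by exact_mod_cast htlt
        have h2 : (u0 : ℝ) < b := by exact_mod_cast hblt
        have h3 : (u0 : ℝ) * s < (b : ℝ) * s := by
          exact mul_lt_mul_of_pos_right h2 hs0
        linarith
      have hα1 : 1 < α := lt_trans hε1 hαε
      have hε0 : 0 < ε := lt_trans one_pos hε1
      have hβ1 : 1 < β := by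
        by_contra hc
        push_neg at hc
        have h16 : β * ε ≤ 1 * ε := mul_le_mul_of_nonneg_right hc hε0.le
        rw [one_mul, hβε] at h16
        linarith
      have hβ0 : 0 < β := lt_trans one_pos hβ1
      have hβb0 : 0 < βb := by
        by_contra hc
        push_neg at hc
        have h17 : β * βb ≤ 0 := mul_nonpos_of_nonneg_of_nonpos hβ0.le hc
        linarith [hββb]
      have hβb1 : βb < 1 := by
        have h18 : 1 * βb < β * βb := mul_lt_mul_of_pos_right hβ1 hβb0
        rw [one_mul, hββb] at h18
        exact h18
      have hαb0 : 0 < αb := by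
        by_contra hc
        push_neg at hc
        have h19 : α * αb ≤ 0 :=
          mul_nonpos_of_nonneg_of_nonpos (lt_trans one_pos hα1).le hc
        linarith [hαab]
      have ht'1 : 1 < (t' : ℝ) := by
        have h10 : (t' : ℝ) = β + βb := by rw [hβ, hβb]; ring
        rw [h10]; linarith
      have ht'2 : 2 ≤ t' := by
        have h11 : (1 : ℤ) < t' := by exact_mod_cast ht'1
        omega
      have hu'0 : 0 < u' := by
        have h1 : 0 < (u' : ℝ) * s := by
          have h12 : (u' : ℝ) * s = β - βb := by rw [hβ, hβb]; ring
          rw [h12]; linarith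
        have h13 : (0 : ℝ) < (u' : ℝ) := by
          by_contra hc
          push_neg at hc
          have h20 : (u' : ℝ) * s ≤ 0 := mul_nonpos_of_nonpos_of_nonneg hc hs0.le
          linarith
        exact_mod_cast h13
      have ht'3 : 2 < t' := by
        rcases lt_or_eq_of_le ht'2 with h | h
        · exact h
        · exfalso
          rw [← h] at hnorm'
          have h14 : (d : ℤ) * u' ^ 2 = 0 := by linarith [hnorm']
          have hd0' : (0 : ℤ) < d := by exact_mod_cast hd0
          have h21 : (0 : ℤ) < (d : ℤ) * u' ^ 2 := by positivity
          linarith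
      have hβα : β < α := by
        have h22 : β * 1 < β * ε := mul_lt_mul_of_pos_left hε1 hβ0
        rw [mul_one, hβε] at h22
        exact h22
      have ht'a : (t' : ℝ) < (a : ℝ) := by
        have e3 : (t' : ℝ) = β + βb := by rw [hβ, hβb]; ring
        have e4 : (a : ℝ) = α + αb := by rw [hα, hαb]; ring
        have hαβ1 : (1 : ℝ) < α * β := by
          have := mul_lt_mul'' hα1 hβ1 zero_le_one zero_le_one
          linarith
        have key : (0 : ℝ) < (α - β) * (α * β - 1) :=
          mul_pos (sub_pos.mpr hβα) (sub_pos.mpr hαβ1)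
        have hm : (α + αb - β - βb) * (α * β) = (α - β) * (α * β - 1) := by
          linear_combination β * hαab - α * hββb
        have hfac : 0 < α + αb - β - βb := by
          by_contra hc
          push_neg at hc
          have h23 : (α + αb - β - βb) * (α * β) ≤ 0 :=
            mul_nonpos_of_nonpos_of_nonneg hc (by positivity)
          rw [hm] at h23
          linarith
        rw [e3, e4]
        linarith
      have ht'aZ : t' < (a : ℤ) := by exact_mod_cast ht'a
      have hcast1 : ((t'.toNat : ℤ)) = t' := Int.toNat_of_nonneg (by omega)
      have hcast2 : ((u'.toNat : ℤ)) = u' := Int.toNat_of_nonneg (by omega)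
      have hlt : t'.toNat < a := by omega
      have harg1 : 2 < t'.toNat := by omega
      have harg2 : 0 < u'.toNat := by omega
      have harg3 : t'.toNat ^ 2 = d * u'.toNat ^ 2 + 4 := by
        have h15 : ((t'.toNat : ℤ)) ^ 2 = (d : ℤ) * ((u'.toNat : ℤ)) ^ 2 + 4 := by
          rw [hcast1, hcast2]; exact hnorm'
        exact_mod_cast h15
      obtain ⟨n, hn1, hpn⟩ := IH t'.toNat hlt u'.toNat harg1 harg2 harg3
      refine ⟨n + 1, by omega, ?_⟩
      apply ev_inj d hirr
      have hval := ev_evb_pseq d (t0 : ℤ) (u0 : ℤ) hfZ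
      have hev_t0 : ev d ((t0 : ℤ), (u0 : ℤ)) = ε := by
        rw [hε]; simp only [ev]; push_cast; ring
      have h1 : ev d (pseq (t0 : ℤ) (u0 : ℤ) (n + 1)) = ε ^ (n + 1) := by
        rw [(hval (n + 1)).1, hev_t0]
      have h2 : ev d (pseq (t0 : ℤ) (u0 : ℤ) n) = ε ^ n := by
        rw [(hval n).1, hev_t0]
      rw [hpn] at h2
      have h3 : ev d ((t'.toNat : ℤ), (u'.toNat : ℤ)) = β := by
        rw [hβ]; simp only [ev]; rw [hcast1, hcast2]
      have hβn : ε ^ n = β := by rw [← h2, h3]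
      have h5 : ev d ((a : ℤ), (b : ℤ)) = α := by
        rw [hα]; simp only [ev]; push_cast; ring
      rw [h1, h5, pow_succ, hβn, hβε]

noncomputable def fT (d : ℕ) : ℕ := if h : ∃ t u, IsFundSol d t u then h.choose else 0

noncomputable def fU (d : ℕ) : ℕ :=
  if h : ∃ t u, IsFundSol d t u then h.choose_spec.choose else 0

lemma f_spec {d : ℕ} (h : ∃ t u, IsFundSol d t u) : IsFundSol d (fT d) (fU d) := by
  rw [fT, dif_pos h, fU, dif_pos h]
  exact h.choose_spec.choose_spec

lemma ev_nat (d a b : ℕ) :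
    ev d ((a : ℤ), (b : ℤ)) = ((a : ℝ) + (b : ℝ) * Real.sqrt d) / 2 := by
  simp only [ev]; push_cast; ring

lemma eps_ev {d : ℕ} (hd0 : 0 < d) (h : IsFundSol d (fT d) (fU d)) :
    eps d = ev d ((fT d : ℤ), (fU d : ℤ)) := by
  rw [eps_eq hd0 h, ev_nat]

lemma fund_t_gt_two {d t0 u0 : ℕ} (hd0 : 0 < d) (hfund : IsFundSol d t0 u0) : 2 < t0 := by
  obtain ⟨-, hu0, hf, -⟩ := hfund
  have h5 : 5 ≤ t0 ^ 2 := by nlinarith [hd0, hu0]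
  by_contra hc
  push_neg at hc
  have : t0 ^ 2 ≤ 4 := by nlinarith
  omega

lemma one_lt_ev {d t0 u0 : ℕ} (hd0 : 0 < d) (hfund : IsFundSol d t0 u0) :
    1 < ev d ((t0 : ℤ), (u0 : ℤ)) := by
  have hs0 : 0 < Real.sqrt d := Real.sqrt_pos.mpr (by exact_mod_cast hd0)
  have ht0 : 2 < t0 := fund_t_gt_two hd0 hfund
  have h8 : (3 : ℝ) ≤ (t0 : ℝ) := by exact_mod_cast ht0
  have h9 : (0 : ℝ) < (u0 : ℝ) := by exact_mod_cast hfund.2.1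
  rw [ev_nat]
  nlinarith [mul_pos h9 hs0]

/-- All the facts about `pseq` at `d` needed for the main theorem. -/
lemma main_d {d : ℕ} (hd : d ∈ PosDisc) (n : ℕ) (hn : 1 ≤ n) :
    2 < (pseq (fT d : ℤ) (fU d : ℤ) n).1 ∧ 0 < (pseq (fT d : ℤ) (fU d : ℤ) n).2 ∧
      (pseq (fT d : ℤ) (fU d : ℤ) n).1 ^ 2 =
        (d : ℤ) * (pseq (fT d : ℤ) (fU d : ℤ) n).2 ^ 2 + 4 ∧
      ev d (pseq (fT d : ℤ) (fU d : ℤ) n) = eps d ^ n ∧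
      ev d (pseq (fT d : ℤ) (fU d : ℤ) n) = pf ((pseq (fT d : ℤ) (fU d : ℤ) n).1 : ℝ) := by
  have hd0 : 0 < d := hd.1
  have hfd : IsFundSol d (fT d) (fU d) := f_spec (exists_fund d hd)
  have heqZ : ((fT d : ℤ)) ^ 2 = (d : ℤ) * (fU d : ℤ) ^ 2 + 4 := by
    exact_mod_cast hfd.2.2.1
  have hev1 : 1 < ev d ((fT d : ℤ), (fU d : ℤ)) := one_lt_ev hd0 hfd
  obtain ⟨h1, h2⟩ := pseq_pos d hd0 (fT d : ℤ) (fU d : ℤ) heqZ hev1 n hn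
  have h3 := pseq_norm d (fT d : ℤ) (fU d : ℤ) heqZ n
  have h4 : ev d (pseq (fT d : ℤ) (fU d : ℤ) n) = eps d ^ n := by
    rw [(ev_evb_pseq d (fT d : ℤ) (fU d : ℤ) heqZ n).1, eps_ev hd0 hfd]
  have h5 := sol_ev_pf d (pseq (fT d : ℤ) (fU d : ℤ) n) h2.le h3
  exact ⟨h1, h2, h3, h4, h5⟩

end Stmt4Aux

/-- Let `x > 2` and let `X` be the solution of `(X + √(X² − 4))/2 = x`.  There is a
bijection between the pairs `(d, n)` with `d ∈ 𝒟`, `n ≥ 1` and `ε_dⁿ ≤ x`, and the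
pairs of positive integers `(t, u)` with `2 < t ≤ X` and `(t² − 4)/u² ∈ 𝒟`, given by
`ε_dⁿ = (t + u √d)/2`. -/
theorem stmt_4 (x X : ℝ) (hx : 2 < x) (hX : (X + Real.sqrt (X ^ 2 - 4)) / 2 = x) :
    ∃ e : {p : ℕ × ℕ // p.1 ∈ PosDisc ∧ 1 ≤ p.2 ∧ eps p.1 ^ p.2 ≤ x} ≃
        {q : ℕ × ℕ // 2 < q.1 ∧ (q.1 : ℝ) ≤ X ∧ 0 < q.2 ∧ q.2 ^ 2 ∣ q.1 ^ 2 - 4 ∧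
          (q.1 ^ 2 - 4) / q.2 ^ 2 ∈ PosDisc},
      ∀ p, eps p.val.1 ^ p.val.2 =
        (((e p).val.1 : ℝ) + ((e p).val.2 : ℝ) * Real.sqrt p.val.1) / 2 := by
  classical
  open Stmt4Aux in
  have hxpf : pf X = x := hX
  have hX2 : 2 ≤ X := by
    by_contra hc
    push_neg at hc
    rcases le_or_gt X (-2) with h | h
    · have h1 : Real.sqrt (X ^ 2 - 4) ≤ Real.sqrt (X ^ 2) := Real.sqrt_le_sqrt (by nlinarith)
      have h2 : Real.sqrt (X ^ 2) = |X| := Real.sqrt_sq_eq_abs X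
      have h3 : |X| = -X := abs_of_nonpos (by linarith)
      rw [h2, h3] at h1
      linarith
    · have h1 : X ^ 2 - 4 ≤ 0 := by nlinarith
      have h2 : Real.sqrt (X ^ 2 - 4) = 0 := Real.sqrt_eq_zero_of_nonpos h1
      rw [h2] at hX
      linarith
  -- the forward map
  set A := {p : ℕ × ℕ // p.1 ∈ PosDisc ∧ 1 ≤ p.2 ∧ eps p.1 ^ p.2 ≤ x} with hA
  set B := {q : ℕ × ℕ // 2 < q.1 ∧ (q.1 : ℝ) ≤ X ∧ 0 < q.2 ∧ q.2 ^ 2 ∣ q.1 ^ 2 - 4 ∧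
          (q.1 ^ 2 - 4) / q.2 ^ 2 ∈ PosDisc} with hB
  -- facts about the pair attached to p : A
  have main : ∀ p : A, ∃ t u : ℕ,
      ((pseq (fT p.val.1 : ℤ) (fU p.val.1 : ℤ) p.val.2).1 = (t : ℤ) ∧
       (pseq (fT p.val.1 : ℤ) (fU p.val.1 : ℤ) p.val.2).2 = (u : ℤ)) ∧
      2 < t ∧ 0 < u ∧ t ^ 2 = p.val.1 * u ^ 2 + 4 ∧
      eps p.val.1 ^ p.val.2 = ((t : ℝ) + (u : ℝ) * Real.sqrt p.val.1) / 2 ∧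
      eps p.val.1 ^ p.val.2 = pf (t : ℝ) := by
    intro p
    obtain ⟨hd, hn, hle⟩ := p.2
    obtain ⟨h1, h2, h3, h4, h5⟩ := main_d hd p.val.2 hn
    obtain ⟨t1, ht1⟩ : ∃ t1 : ℕ,
        (pseq (fT p.val.1 : ℤ) (fU p.val.1 : ℤ) p.val.2).1 = (t1 : ℤ) :=
      ⟨_, (Int.toNat_of_nonneg (by omega)).symm⟩
    obtain ⟨u1, hu1⟩ : ∃ u1 : ℕ,
        (pseq (fT p.val.1 : ℤ) (fU p.val.1 : ℤ) p.val.2).2 = (u1 : ℤ) :=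
      ⟨_, (Int.toNat_of_nonneg (by omega)).symm⟩
    rw [ht1, hu1] at h3
    rw [ht1] at h1 h5
    rw [hu1] at h2
    refine ⟨t1, u1, ⟨ht1, hu1⟩, by exact_mod_cast h1, by exact_mod_cast h2,
      by exact_mod_cast h3, ?_, ?_⟩
    · rw [← h4]
      simp only [ev, ht1, hu1]
      push_cast
      ring
    · rw [← h4, h5]
      norm_cast
  choose ft fu hcast h2t h0u hnorm hval hpf using main
  have hFmem : ∀ p : A, 2 < ft p ∧ ((ft p : ℝ)) ≤ X ∧ 0 < fu p ∧
      (fu p) ^ 2 ∣ (ft p) ^ 2 - 4 ∧ ((ft p) ^ 2 - 4) / (fu p) ^ 2 ∈ PosDisc := by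
    intro p
    obtain ⟨hd, hn, hle⟩ := p.2
    have hsub : (ft p) ^ 2 - 4 = p.val.1 * (fu p) ^ 2 :=
      Nat.sub_eq_of_eq_add (hnorm p)
    have hdiv : ((ft p) ^ 2 - 4) / (fu p) ^ 2 = p.val.1 := by
      rw [hsub, mul_comm]
      exact Nat.mul_div_cancel_left _ (pow_pos (h0u p) 2)
    refine ⟨h2t p, ?_, h0u p, ⟨p.val.1, by rw [hsub]; ring⟩, by rw [hdiv]; exact hd⟩
    have hft2 : (2 : ℝ) ≤ (ft p : ℝ) := by exact_mod_cast (h2t p).le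
    have : pf (ft p : ℝ) ≤ pf X := by rw [hpf p] at hle; rwa [hxpf]
    exact (pf_le_iff hft2 hX2).mp this
  set F : A → B := fun p => ⟨(ft p, fu p), hFmem p⟩ with hF
  have hinj : Function.Injective F := by
    intro p q hpq
    have hv : ft p = ft q ∧ fu p = fu q := by
      have := congrArg Subtype.val hpq
      simp only [hF, Prod.mk.injEq] at this
      exact this
    obtain ⟨hdp, hnp, hlep⟩ := p.2
    obtain ⟨hdq, hnq, hleq⟩ := q.2
    -- same discriminant
    have hd : p.val.1 = q.val.1 := by
      have h1 := hnorm p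
      have h2 := hnorm q
      rw [hv.1, hv.2] at h1
      have h3 : p.val.1 * (fu q) ^ 2 = q.val.1 * (fu q) ^ 2 := by omega
      have h4 : (0:ℕ) < (fu q) ^ 2 := pow_pos (h0u q) 2
      exact Nat.eq_of_mul_eq_mul_right h4 h3
    -- same exponent
    have hn : p.val.2 = q.val.2 := by
      have h1 : eps p.val.1 ^ p.val.2 = eps q.val.1 ^ q.val.2 := by
        rw [hpf p, hpf q, hv.1]
      rw [← hd] at h1
      have heps1 : 1 < eps p.val.1 := by
        have hfd : IsFundSol p.val.1 (fT p.val.1) (fU p.val.1) :=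
          f_spec (exists_fund p.val.1 hdp)
        rw [eps_ev hdp.1 hfd]
        exact one_lt_ev hdp.1 hfd
      rcases lt_trichotomy p.val.2 q.val.2 with h | h | h
      · exact absurd h1 (ne_of_lt (pow_lt_pow_right₀ heps1 h))
      · exact h
      · exact absurd h1.symm (ne_of_lt (pow_lt_pow_right₀ heps1 h))
    exact Subtype.ext (Prod.ext hd hn)
  have hsurj : Function.Surjective F := by
    rintro ⟨⟨t, u⟩, hqt, hqX, hqu, hqdvd, hqD⟩
    set d := (t ^ 2 - 4) / u ^ 2 with hdd
    obtain ⟨c, hcd⟩ := hqdvd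
    have hcd' : d = c := by
      rw [hdd, hcd]; exact Nat.mul_div_cancel_left _ (pow_pos hqu 2)
    have h4t : 4 ≤ t ^ 2 := by nlinarith [hqt]
    have hnat : t ^ 2 = d * u ^ 2 + 4 := by
      rw [hcd']
      have hcd2 : t ^ 2 - 4 = c * u ^ 2 := by
        have : (t, u).1 ^ 2 - 4 = (t, u).2 ^ 2 * c := hcd
        rw [mul_comm] at this
        exact this
      have h6 := Nat.sub_add_cancel h4t
      rw [hcd2] at h6
      exact h6.symm
    have hfd : IsFundSol d (fT d) (fU d) := f_spec (exists_fund d hqD)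
    obtain ⟨n, hn1, hpn⟩ := pseq_surj d (fT d) (fU d) hqD hfd t u hqt hqu hnat
    have hd0 : 0 < d := hqD.1
    have hepsn : eps d ^ n = pf (t : ℝ) := by
      have h4 : ev d (pseq (fT d : ℤ) (fU d : ℤ) n) = eps d ^ n := by
        rw [(ev_evb_pseq d (fT d : ℤ) (fU d : ℤ) (by exact_mod_cast hfd.2.2.1) n).1,
          eps_ev hd0 hfd]
      rw [← h4, hpn]
      have heqZ : ((t : ℤ)) ^ 2 = (d : ℤ) * ((u : ℤ)) ^ 2 + 4 := by exact_mod_cast hnat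
      have h7 := sol_ev_pf d ((t : ℤ), (u : ℤ)) (by positivity) heqZ
      rw [h7]
      norm_cast
    have hle : eps d ^ n ≤ x := by
      rw [hepsn, ← hxpf]
      exact (pf_le_iff (by exact_mod_cast hqt.le) hX2).mpr hqX
    refine ⟨⟨(d, n), hqD, hn1, hle⟩, ?_⟩
    apply Subtype.ext
    have hc := hcast ⟨(d, n), hqD, hn1, hle⟩
    rw [hpn] at hc
    simp only [hF]
    have h1 : ft ⟨(d, n), hqD, hn1, hle⟩ = t := by
      have h1' : ((ft ⟨(d, n), hqD, hn1, hle⟩ : ℕ) : ℤ) = ((t : ℕ) : ℤ) := hc.1.symm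
      exact_mod_cast h1'
    have h2 : fu ⟨(d, n), hqD, hn1, hle⟩ = u := by
      have h2' : ((fu ⟨(d, n), hqD, hn1, hle⟩ : ℕ) : ℤ) = ((u : ℕ) : ℤ) := hc.2.symm
      exact_mod_cast h2'
    rw [h1, h2]
  refine ⟨Equiv.ofBijective F ⟨hinj, hsurj⟩, ?_⟩
  intro p
  have := hval p
  simpa [hF, Equiv.ofBijective] using this
end

section
/- For every integer ℓ ≥ 1 and prime p, the k-th divisor function satisfies ∑_{n=1}^∞ d_ℓ(n) e^{−n/y} / n ≤ (log 3y)^ℓ for all y > 3, where d_ℓ is the ℓ-fold divisor function. -/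
/-!
Put `t = 1/y` and `w(n) = e^{-(n-1)t}/n`. Since `ab - 1 ≥ (a - 1) + (b - 1)` for `a, b ≥ 1`, the
weight `w` is submultiplicative with `w(1) = 1`, so expanding `d_ℓ` over factorizations
`n = a₁ ⋯ a_ℓ` gives `∑ d_ℓ(n) w(n) ≤ (∑ w(n))^ℓ`. The logarithmic series gives
`∑ w(n) = -e^t log(1 - e^{-t}) ≤ e^t (t - log t)`, which is at most `log 3 - log t = log 3y`
for `t ≤ 1/3`; finally `e^{-nt}/n ≤ w(n)`.
-/

open Real
open scoped ENNReal

theorem Nat.tsum_sum_divisorsAntidiagonal_le (H : ℕ × ℕ → ℝ≥0∞) :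
    ∑' n : ℕ, ∑ x ∈ n.divisorsAntidiagonal, H x ≤ ∑' x, H x := by
  simp_rw [← Finset.tsum_subtype]
  rw [← ENNReal.tsum_sigma]
  refine ENNReal.tsum_comp_le_tsum_of_injective
    (f := fun σ : Σ n : ℕ, n.divisorsAntidiagonal => (σ.2 : ℕ × ℕ)) (fun σ τ h => ?_) H
  refine Sigma.subtype_ext ?_ h
  have hσ := (Nat.mem_divisorsAntidiagonal.mp σ.2.2).1
  have hτ := (Nat.mem_divisorsAntidiagonal.mp τ.2.2).1
  simp only at h
  rw [← hσ, ← hτ, h]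

namespace ArithmeticFunction

variable {G : ℕ → ℝ≥0∞}

theorem tsum_mul_apply_mul_le (hG : ∀ a b, a ≠ 0 → b ≠ 0 → G (a * b) ≤ G a * G b)
    (f g : ArithmeticFunction ℕ) :
    ∑' n, ((f * g) n : ℝ≥0∞) * G n ≤
      (∑' n, (f n : ℝ≥0∞) * G n) * ∑' n, (g n : ℝ≥0∞) * G n := by
  rw [← ENNReal.tsum_mul_right]
  simp_rw [← ENNReal.tsum_mul_left]
  rw [← ENNReal.tsum_prod]
  refine le_trans (ENNReal.tsum_le_tsum fun n => ?_)
    (Nat.tsum_sum_divisorsAntidiagonal_le fun x => f x.1 * G x.1 * (g x.2 * G x.2))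
  rw [mul_apply, Nat.cast_sum, Finset.sum_mul]
  refine Finset.sum_le_sum fun x hx => ?_
  obtain ⟨rfl, -⟩ := Nat.mem_divisorsAntidiagonal.mp hx
  obtain ⟨h1, h2⟩ := Nat.ne_zero_of_mem_divisorsAntidiagonal hx
  calc ((f x.1 * g x.2 : ℕ) : ℝ≥0∞) * G (x.1 * x.2)
      ≤ (f x.1 * g x.2 : ℕ) * (G x.1 * G x.2) := by gcongr; exact hG _ _ h1 h2
    _ = f x.1 * G x.1 * (g x.2 * G x.2) := by push_cast; ring

theorem tsum_zeta_pow_mul_le (hG : ∀ a b, a ≠ 0 → b ≠ 0 → G (a * b) ≤ G a * G b)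
    (hG₁ : G 1 ≤ 1) (l : ℕ) :
    ∑' n, ((zeta ^ l) n : ℝ≥0∞) * G n ≤ (∑' n, G n) ^ l := by
  induction l with
  | zero => simpa [one_apply, ite_mul] using hG₁
  | succ l ih =>
    rw [pow_succ, pow_succ]
    refine (tsum_mul_apply_mul_le hG _ _).trans (mul_le_mul' ih (ENNReal.tsum_le_tsum fun n => ?_))
    by_cases hn : n = 0 <;> simp [hn]

end ArithmeticFunction

/-- `e^t` times the weight `e^{-nt}/n`, normalised to be submultiplicative with value `1` at `1`;
its value at `0` is `0` (division by zero). -/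
noncomputable def expWeight (t : ℝ) (n : ℕ) : ℝ := exp (-(n - 1) * t) / n

section expWeight

variable {t : ℝ}

theorem expWeight_nonneg (t : ℝ) (n : ℕ) : 0 ≤ expWeight t n := by
  unfold expWeight; positivity

@[simp] theorem expWeight_one (t : ℝ) : expWeight t 1 = 1 := by simp [expWeight]

theorem expWeight_mul_le (ht : 0 ≤ t) {a b : ℕ} (ha : a ≠ 0) (hb : b ≠ 0) :
    expWeight t (a * b) ≤ expWeight t a * expWeight t b := by
  have ha1 : (1 : ℝ) ≤ a := by exact_mod_cast Nat.one_le_iff_ne_zero.mpr ha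
  have hb1 : (1 : ℝ) ≤ b := by exact_mod_cast Nat.one_le_iff_ne_zero.mpr hb
  rw [expWeight, expWeight, expWeight, div_mul_div_comm, ← exp_add, Nat.cast_mul]
  gcongr
  nlinarith [mul_nonneg (sub_nonneg.mpr ha1) (sub_nonneg.mpr hb1)]

theorem exp_neg_mul_div_le_expWeight (ht : 0 ≤ t) (n : ℕ) :
    exp (-n * t) / n ≤ expWeight t n := by
  unfold expWeight
  gcongr
  linarith

theorem hasSum_expWeight (ht : 0 < t) : HasSum (expWeight t) (exp t * -log (1 - exp (-t))) := by
  have hx : |exp (-t)| < 1 := by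
    rw [abs_of_pos (exp_pos _), exp_lt_one_iff]; linarith
  have hshift : (fun n : ℕ => expWeight t (n + 1)) =
      fun n : ℕ => exp t * (exp (-t) ^ (n + 1) / (n + 1)) := by
    funext n
    rw [expWeight, ← exp_nat_mul, mul_div_assoc', ← exp_add]
    push_cast
    ring_nf
  rw [← hasSum_nat_add_iff' 1, hshift]
  simpa [expWeight] using (hasSum_pow_div_log_of_abs_lt_one hx).mul_left (exp t)

end expWeight

theorem neg_log_one_sub_exp_neg_le {t : ℝ} (ht : 0 < t) : -log (1 - exp (-t)) ≤ t - log t := by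
  have h : t * exp (-t) ≤ 1 - exp (-t) :=
    calc t * exp (-t) = (t + 1) * exp (-t) - exp (-t) := by ring
      _ ≤ exp t * exp (-t) - exp (-t) := by gcongr; exact add_one_le_exp t
      _ = 1 - exp (-t) := by rw [← exp_add, add_neg_cancel, exp_zero]
  have := log_le_log (by positivity) h
  rw [log_mul ht.ne' (exp_pos _).ne', log_exp] at this
  linarith

theorem exp_one_third_le : exp (1 / 3) ≤ 3 / 2 := by
  rw [← pow_le_pow_iff_left₀ (exp_pos _).le (by norm_num) (by norm_num : 3 ≠ 0),
    ← exp_nat_mul]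
  norm_num
  linarith [exp_one_lt_three]

theorem exp_mul_sub_log_le {t : ℝ} (ht : 0 < t) (ht3 : t ≤ 1 / 3) :
    exp t * (t - log t) ≤ log 3 - log t := by
  have hexp : exp t ≤ 3 / 2 := (exp_le_exp.mpr ht3).trans exp_one_third_le
  have hlog3 : 1 ≤ log 3 := by
    rw [le_log_iff_exp_le (by norm_num)]; exact exp_one_lt_three.le
  have hlogt : 0 ≤ -log t := neg_nonneg.mpr (log_nonpos ht.le (by linarith))
  have hsub : exp t - 1 ≤ t * exp t := by
    have h := mul_le_mul_of_nonneg_right (one_sub_le_exp_neg t) (exp_pos t).le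
    rw [← exp_add, neg_add_cancel, exp_zero] at h
    linarith
  have hent : t * -log t ≤ log 3 / 3 := by
    have h3t : 3 ≤ t⁻¹ := by rw [le_inv_comm₀ (by norm_num) ht]; linarith
    have := log_div_self_antitoneOn (exp_one_lt_three.le : exp 1 ≤ 3)
      (exp_one_lt_three.le.trans h3t) h3t
    simp only [log_inv, div_inv_eq_mul] at this
    linarith
  calc exp t * (t - log t) = exp t * t + (exp t - 1) * -log t + -log t := by ring
    _ ≤ 3 / 2 * (1 / 3) + t * exp t * -log t + -log t := by gcongr
    _ = 1 / 2 + exp t * (t * -log t) + -log t := by ring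
    _ ≤ 1 / 2 + 3 / 2 * (log 3 / 3) + -log t := by gcongr
    _ ≤ log 3 - log t := by linarith

theorem tsum_zeta_pow_mul_expWeight_le {t : ℝ} (ht : 0 < t) (ht3 : t ≤ 1 / 3) (l : ℕ) :
    ∑' n, ((ArithmeticFunction.zeta ^ l) n : ℝ≥0∞) * ENNReal.ofReal (expWeight t n) ≤
      ENNReal.ofReal (log 3 - log t) ^ l := by
  refine (ArithmeticFunction.tsum_zeta_pow_mul_le (fun a b ha hb => ?_) (by simp) l).trans ?_
  · rw [← ENNReal.ofReal_mul (expWeight_nonneg _ _)]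
    exact ENNReal.ofReal_le_ofReal (expWeight_mul_le ht.le ha hb)
  · have hsum := hasSum_expWeight ht
    rw [← ENNReal.ofReal_tsum_of_nonneg (expWeight_nonneg t) hsum.summable, hsum.tsum_eq]
    gcongr
    calc exp t * -log (1 - exp (-t)) ≤ exp t * (t - log t) := by
          gcongr; exact neg_log_one_sub_exp_neg_le ht
      _ ≤ log 3 - log t := exp_mul_sub_log_le ht ht3

/-- Summed in `ℝ≥0∞`, where no summability has to be checked, and then cast back. -/
theorem tsum_zeta_pow_mul_exp_div_le {t : ℝ} (ht : 0 < t) (ht3 : t ≤ 1 / 3) (l : ℕ) :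
    ∑' n : ℕ, ((ArithmeticFunction.zeta ^ l) (n + 1) : ℝ) *
        exp (-((n : ℝ) + 1) * t) / ((n : ℝ) + 1) ≤ (log 3 - log t) ^ l := by
  set u : ℕ → ℝ≥0∞ := fun n => ((ArithmeticFunction.zeta ^ l) n : ℝ≥0∞) *
    ENNReal.ofReal (expWeight t n)
  have hterm (n : ℕ) : ENNReal.ofReal (((ArithmeticFunction.zeta ^ l) (n + 1) : ℝ) *
      exp (-((n : ℝ) + 1) * t) / ((n : ℝ) + 1)) ≤ u (n + 1) := by
    simp only [u]
    rw [← ENNReal.ofReal_natCast, ← ENNReal.ofReal_mul (Nat.cast_nonneg _), mul_div_assoc]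
    gcongr
    exact_mod_cast exp_neg_mul_div_le_expWeight ht.le (n + 1)
  have hbound : 0 ≤ log 3 - log t := by
    linarith [log_nonpos ht.le (by linarith), log_nonneg (by norm_num : (1 : ℝ) ≤ 3)]
  calc _ = (∑' n : ℕ, ENNReal.ofReal (((ArithmeticFunction.zeta ^ l) (n + 1) : ℝ) *
        exp (-((n : ℝ) + 1) * t) / ((n : ℝ) + 1))).toReal := by
        rw [ENNReal.tsum_toReal_eq fun _ => ENNReal.ofReal_ne_top]
        exact tsum_congr fun n => (ENNReal.toReal_ofReal (by positivity)).symm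
    _ ≤ (ENNReal.ofReal (log 3 - log t) ^ l).toReal :=
        ENNReal.toReal_mono (ENNReal.pow_ne_top ENNReal.ofReal_ne_top)
          ((ENNReal.tsum_le_tsum hterm).trans
            ((ENNReal.tsum_comp_le_tsum_of_injective Nat.succ_injective u).trans
              (tsum_zeta_pow_mul_expWeight_le ht ht3 l)))
    _ = (log 3 - log t) ^ l := by
        rw [ENNReal.toReal_pow, ENNReal.toReal_ofReal hbound]

theorem stmt_9_general (l : ℕ) (y : ℝ) (hy : 3 < y) :
    ∑' n : ℕ, ((ArithmeticFunction.zeta ^ l) (n + 1) : ℝ) *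
        Real.exp (-((n : ℝ) + 1) / y) / ((n : ℝ) + 1) ≤ (Real.log (3 * y)) ^ l := by
  have hy₀ : 0 < y := by linarith
  have hlog : log 3 - log y⁻¹ = log (3 * y) := by
    rw [log_inv, log_mul (by norm_num) hy₀.ne']; ring
  rw [← hlog]
  have ht3 : y⁻¹ ≤ 1 / 3 := by rw [one_div]; exact inv_anti₀ (by norm_num) hy.le
  simpa only [← div_eq_mul_inv] using tsum_zeta_pow_mul_exp_div_le (inv_pos.mpr hy₀) ht3 l

/-- For every integer `ℓ ≥ 1` and real `y > 3`, the `ℓ`-fold divisor function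
(`d_ℓ = ζ^ℓ` as a Dirichlet convolution power) satisfies
`∑_{n ≥ 1} d_ℓ(n) e^{−n/y} / n ≤ (log 3y)^ℓ`. -/
theorem stmt_9 (l : ℕ) (hl : 1 ≤ l) (y : ℝ) (hy : 3 < y) :
    ∑' n : ℕ, ((ArithmeticFunction.zeta ^ l) (n + 1) : ℝ) *
        Real.exp (-((n : ℝ) + 1) / y) / ((n : ℝ) + 1) ≤ (Real.log (3 * y)) ^ l :=
  stmt_9_general l y hy
end

section
/- For every real k > 0, the function g_k defined multiplicatively by g_k(2^a) = ((−1)^a/2)(1 + 2(1+(−1)^a)/(4^{k+2}(2^{k+2}−1)))(1 + 1/2^{k+2} + 2/4^{k+2} + 4/(4^{k+2}(2^{k+2}−1)))⁻¹ and, for odd primes p, g_k(p^a) = −(1/p)(1 + 2/(p^{k+2}−1))⁻¹ for odd a and g_k(p^a) = (1 − 2/p)(1 + 2(p−1)/((p−2)(p^{k+2}−1)))(1 + 2/(p^{k+2}−1))⁻¹ for even a, satisfies |g_k(n)| ≤ 1/n₀ for every positive integer n, where n₀ is the squarefree part of n. -/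
/-- The squarefree part of `n`: the product of the primes dividing `n` to an odd power. -/
def squarefreePart (n : ℕ) : ℕ :=
  ∏ p ∈ n.primeFactors, if Odd (n.factorization p) then p else 1

section aux

/-- Abstract bound for the prime 2. -/
lemma aux_two (X Y c : ℝ) (hX : 1 < X) (hY : 0 < Y) (hc1 : |c| = 1) :
    |(c / 2) * (1 + 2 * (1 + c) / (Y * (X - 1))) *
        (1 + 1 / X + 2 / Y + 4 / (Y * (X - 1)))⁻¹| ≤ 1 / 2 := by
  have hcle : c ≤ 1 := (abs_le.mp hc1.le).2
  have hcge : -1 ≤ c := (abs_le.mp hc1.le).1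
  have hD : 0 < Y * (X - 1) := by nlinarith
  have hA : 0 ≤ 1 + 2 * (1 + c) / (Y * (X - 1)) := by
    have := div_nonneg (show (0:ℝ) ≤ 2 * (1 + c) by linarith) hD.le
    linarith
  have hX0 : 0 < X := by linarith
  have hE : 0 < 1 + 1 / X + 2 / Y + 4 / (Y * (X - 1)) := by positivity
  rw [abs_mul, abs_mul, abs_div, hc1, abs_of_nonneg hA, abs_inv, abs_of_pos hE]
  have hle : 1 + 2 * (1 + c) / (Y * (X - 1)) ≤ 1 + 1 / X + 2 / Y + 4 / (Y * (X - 1)) := by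
    have h1 : 2 * (1 + c) / (Y * (X - 1)) ≤ 4 / (Y * (X - 1)) := by
      gcongr
      · linarith
    have h2 : 0 ≤ 1 / X := by positivity
    have h3 : 0 ≤ 2 / Y := by positivity
    linarith
  have habs2 : |(2:ℝ)| = 2 := by norm_num
  rw [habs2]
  calc 1 / 2 * (1 + 2 * (1 + c) / (Y * (X - 1))) *
        (1 + 1 / X + 2 / Y + 4 / (Y * (X - 1)))⁻¹
      ≤ 1 / 2 * ((1 + 1 / X + 2 / Y + 4 / (Y * (X - 1))) *
        (1 + 1 / X + 2 / Y + 4 / (Y * (X - 1)))⁻¹) := by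
        rw [mul_assoc]
        apply mul_le_mul_of_nonneg_left _ (by norm_num)
        exact mul_le_mul_of_nonneg_right hle (by positivity)
    _ = 1 / 2 := by rw [mul_inv_cancel₀ (ne_of_gt hE), mul_one]

/-- Abstract bound for odd primes, odd exponent. -/
lemma aux_odd (P X : ℝ) (hP : 3 ≤ P) (hX : 1 < X) :
    |-(1 / P) * (1 + 2 / (X - 1))⁻¹| ≤ 1 / P := by
  have hP0 : 0 < P := by linarith
  have hD : 0 < X - 1 := by linarith
  have hE : 0 < 1 + 2 / (X - 1) := by positivity
  have hE1 : 1 ≤ 1 + 2 / (X - 1) := by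
    have : 0 ≤ 2 / (X - 1) := by positivity
    linarith
  rw [abs_mul, abs_neg, abs_inv, abs_div, abs_one, abs_of_pos hP0, abs_of_pos hE]
  calc 1 / P * (1 + 2 / (X - 1))⁻¹ ≤ 1 / P * 1 := by
        apply mul_le_mul_of_nonneg_left _ (by positivity)
        exact inv_le_one_of_one_le₀ hE1
    _ = 1 / P := mul_one _

/-- Abstract bound for odd primes, even exponent. -/
lemma aux_even (P X : ℝ) (hP : 3 ≤ P) (hX : 1 < X) :
    |(1 - 2 / P) * (1 + 2 * (P - 1) / ((P - 2) * (X - 1))) * (1 + 2 / (X - 1))⁻¹| ≤ 1 := by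
  have hP0 : 0 < P := by linarith
  have hP2 : 0 < P - 2 := by linarith
  have hD : 0 < X - 1 := by linarith
  have hE : 0 < 1 + 2 / (X - 1) := by positivity
  have hA : 0 ≤ 1 - 2 / P := by
    rw [sub_nonneg, div_le_one hP0]; linarith
  have hB : 0 ≤ 1 + 2 * (P - 1) / ((P - 2) * (X - 1)) := by
    have : 0 ≤ 2 * (P - 1) / ((P - 2) * (X - 1)) :=
      div_nonneg (by linarith) (by positivity)
    linarith
  rw [abs_of_nonneg (mul_nonneg (mul_nonneg hA hB) (inv_nonneg.mpr hE.le))]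
  have e1 : (1 - 2 / P) * (1 + 2 * (P - 1) / ((P - 2) * (X - 1)))
      = ((P - 2) * (X - 1) + 2 * (P - 1)) / (P * (X - 1)) := by
    field_simp
  have e2 : 1 + 2 / (X - 1) = (P * (X - 1) + 2 * P) / (P * (X - 1)) := by
    field_simp
  have key : (1 - 2 / P) * (1 + 2 * (P - 1) / ((P - 2) * (X - 1))) ≤ 1 + 2 / (X - 1) := by
    rw [e1, e2, div_le_div_iff₀ (by positivity) (by positivity)]
    nlinarith [mul_pos hP0 hD, hD.le, hP0.le]
  calc (1 - 2 / P) * (1 + 2 * (P - 1) / ((P - 2) * (X - 1))) * (1 + 2 / (X - 1))⁻¹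
      ≤ (1 + 2 / (X - 1)) * (1 + 2 / (X - 1))⁻¹ :=
        mul_le_mul_of_nonneg_right key (by positivity)
    _ = 1 := mul_inv_cancel₀ (ne_of_gt hE)

end aux

/-- For every real `k > 0`, the multiplicative function `g_k` of Theorem 3.1 satisfies
`|g_k(n)| ≤ 1/n₀` for every positive integer `n`, where `n₀` is the squarefree part
of `n`. -/
theorem stmt_13 (k : ℝ) (hk : 0 < k) (g : ℕ → ℝ) (hg1 : g 1 = 1)
    (hgmul : ∀ m n : ℕ, Nat.Coprime m n → g (m * n) = g m * g n)
    (hg2 : ∀ a : ℕ, 1 ≤ a →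
      g (2 ^ a) = ((-1 : ℝ) ^ a / 2) *
        (1 + 2 * (1 + (-1 : ℝ) ^ a) / ((4 : ℝ) ^ (k + 2) * ((2 : ℝ) ^ (k + 2) - 1))) *
        (1 + 1 / (2 : ℝ) ^ (k + 2) + 2 / (4 : ℝ) ^ (k + 2) +
          4 / ((4 : ℝ) ^ (k + 2) * ((2 : ℝ) ^ (k + 2) - 1)))⁻¹)
    (hgp : ∀ p : ℕ, p.Prime → p ≠ 2 → ∀ a : ℕ, 1 ≤ a →
      g (p ^ a) = if Odd a then
          -(1 / (p : ℝ)) * (1 + 2 / ((p : ℝ) ^ (k + 2) - 1))⁻¹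
        else
          (1 - 2 / (p : ℝ)) *
            (1 + 2 * ((p : ℝ) - 1) / (((p : ℝ) - 2) * ((p : ℝ) ^ (k + 2) - 1))) *
            (1 + 2 / ((p : ℝ) ^ (k + 2) - 1))⁻¹) :
    ∀ n : ℕ, 0 < n → |g n| ≤ 1 / (squarefreePart n : ℝ) := by
  -- key bound at prime powers
  have hk2 : 0 < k + 2 := by linarith
  have key : ∀ p : ℕ, p.Prime → ∀ a : ℕ, 1 ≤ a →
      |g (p ^ a)| ≤ ((if Odd a then (p : ℝ) else 1))⁻¹ := by
    intro p hp a ha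
    by_cases hp2 : p = 2
    · subst hp2
      have hX : 1 < (2 : ℝ) ^ (k + 2) := by
        rw [Real.one_lt_rpow_iff_of_pos (by norm_num)]
        exact Or.inl ⟨by norm_num, hk2⟩
      have hY : 0 < (4 : ℝ) ^ (k + 2) := Real.rpow_pos_of_pos (by norm_num) _
      have hc1 : |(-1 : ℝ) ^ a| = 1 := by
        rw [abs_pow, abs_neg, abs_one, one_pow]
      have h12 := aux_two ((2:ℝ) ^ (k+2)) ((4:ℝ) ^ (k+2)) ((-1:ℝ) ^ a) hX hY hc1
      rw [hg2 a ha]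
      refine le_trans h12 ?_
      split
      · norm_num
      · norm_num
    · have hP : (3 : ℝ) ≤ (p : ℕ) := by
        have : 3 ≤ p := by
          have := hp.two_le
          omega
        exact_mod_cast this
      have hp1 : (1 : ℝ) < (p : ℝ) := by linarith
      have hX : 1 < (p : ℝ) ^ (k + 2) :=
        Real.one_lt_rpow_iff_of_pos (by linarith) |>.mpr (Or.inl ⟨hp1, hk2⟩)
      rw [hgp p hp hp2 a ha]
      by_cases hodd : Odd a
      · simp only [hodd, if_true]
        simpa [one_div] using aux_odd (p : ℝ) ((p : ℝ) ^ (k + 2)) hP hX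
      · simp only [hodd, if_false]
        simpa using aux_even (p : ℝ) ((p : ℝ) ^ (k + 2)) hP hX
  intro n hn
  rw [Nat.multiplicative_factorization g hgmul hg1 hn.ne']
  rw [Finsupp.prod, Nat.support_factorization, Finset.abs_prod]
  have hcast : ((squarefreePart n : ℕ) : ℝ)
      = ∏ p ∈ n.primeFactors, (if Odd (n.factorization p) then (p : ℝ) else 1) := by
    rw [squarefreePart, Nat.cast_prod]
    exact Finset.prod_congr rfl (fun p _ => by split <;> simp
      )
  rw [hcast, one_div, ← Finset.prod_inv_distrib]
  apply Finset.prod_le_prod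
  · intro p _
    exact abs_nonneg _
  · intro p hpmem
    have hp : p.Prime := Nat.prime_of_mem_primeFactors hpmem
    have ha : 1 ≤ n.factorization p :=
      (Nat.Prime.factorization_pos_of_dvd hp hn.ne' (Nat.dvd_of_mem_primeFactors hpmem))
    exact key p hp _ ha
end

section
/- Let ℕ_x(τ) be a non-increasing function of τ ≥ 0 taking values in [0,1], and suppose for all k in a range 1 ≪ k ≤ K that k∫₀^∞ t^{k−1} ℕ_x(t) dt = (log k)^k · exp((k/log k)(A₀ − 1 + O(1/log k))). Then for κ = e^{τ−A₀} with κ and κe^δ in the admissible range and δ = C₀/√(log κ), one has ∫_{τ+δ}^∞ t^{κ−1} ℕ_x(t) dt ≤ (∫₀^∞ t^{κ−1} ℕ_x(t) dt)·exp(−κ/(log κ)²). -/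
set_option maxHeartbeats 1000000

/-- The constant `A₀` of Theorem 1.4. -/
noncomputable def A0 : ℝ :=
  (∫ t in Set.Ioc (0 : ℝ) 1, Real.log (Real.cosh t) / t ^ 2) +
    (∫ t in Set.Ioi (1 : ℝ), (Real.log (Real.cosh t) - t) / t ^ 2) + 1

private lemma exp_sq_lb {d : ℝ} (hd : 0 ≤ d) : 1 + d + d^2/4 ≤ Real.exp d := by
  have h := Real.add_one_le_exp (d/2)
  have h2 : (0:ℝ) ≤ d/2 + 1 := by linarith
  have h3 : (d/2+1)*(d/2+1) ≤ Real.exp (d/2) * Real.exp (d/2) :=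
    mul_le_mul h h h2 (Real.exp_pos _).le
  have h4 : Real.exp (d/2) * Real.exp (d/2) = Real.exp d := by
    rw [← Real.exp_add]; norm_num
  nlinarith [h3, h4]

private lemma exp_ub {d : ℝ} (hd : 0 ≤ d) (hd3 : d ≤ 1/3) : Real.exp d ≤ 1 + d + d^2 := by
  have h1 : (1 - d/2) * Real.exp (d/2) ≤ 1 := by
    have h2 := mul_le_mul_of_nonneg_right (Real.add_one_le_exp (-(d/2))) (Real.exp_pos (d/2)).le
    rw [← Real.exp_add, neg_add_cancel, Real.exp_zero] at h2
    nlinarith [h2]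
  have hq : (1 - d/2)^2 * Real.exp d ≤ 1 := by
    have h5 : ((1-d/2)*Real.exp (d/2)) * ((1-d/2)*Real.exp (d/2)) ≤ 1 := by
      nlinarith [h1, mul_nonneg (by linarith : (0:ℝ) ≤ 1 - d/2) (Real.exp_pos (d/2)).le]
    have h6 : Real.exp (d/2) * Real.exp (d/2) = Real.exp d := by
      rw [← Real.exp_add]; norm_num
    nlinarith [h5, h6]
  have hpoly : 1 ≤ (1 + d + d^2) * (1 - d/2)^2 := by nlinarith [sq_nonneg d, sq_nonneg (d*(1-3*d))]
  nlinarith [hq, hpoly, Real.exp_pos d, sq_nonneg (1-d/2)]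
private lemma log_lb {y : ℝ} (hy : -(1/2) ≤ y) : y - 2*y^2 ≤ Real.log (1+y) := by
  have hpos : 0 < 1 + y := by linarith
  have h := Real.one_sub_inv_le_log_of_pos hpos
  have h3 : (1+y) * (1+y)⁻¹ = 1 := mul_inv_cancel₀ hpos.ne'
  have hz2 : (1+y)⁻¹ ≤ 2 := by
    have := inv_anti₀ (by norm_num : (0:ℝ) < 1/2) (by linarith : (1:ℝ)/2 ≤ 1+y)
    norm_num at this; linarith
  nlinarith [h, h3, hz2, sq_nonneg y]

private lemma core (a C₁ C₀ L E E' δ η : ℝ) (hC₁ : 0 < C₁) (hC₀ : C₀ = 8*(1+C₁+|a|))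
    (hδL : δ^2 * L = C₀^2) (hδpos : 0 < δ) (hδ3 : δ ≤ 1/3)
    (hη1 : 1 + δ + δ^2/4 ≤ η) (hη2 : η ≤ 1 + δ + δ^2)
    (hLδ : 8*(δ + 1 + |a|) ≤ L * δ) (hL1 : 1 ≤ L) (hLbig : 2*|a| + 2 ≤ L)
    (hE : |E| ≤ C₁/L) (hE' : |E'| ≤ C₁/(L+δ)) :
    (1 - η) * Real.log (L + a + δ) + η * Real.log (L + δ)
      + η/(L+δ)*(a-1+E') + 1/L^2 ≤ Real.log L + (1/L)*(a-1+E) := by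
  set A := |a| with hA
  have haabs : 0 ≤ A := abs_nonneg a
  have hana : -A ≤ a := neg_abs_le a
  have hanb : a ≤ A := le_abs_self a
  have hA2 : A^2 = a^2 := sq_abs a
  have hLpos : 0 < L := by linarith
  have hDpos : 0 < L + δ := by linarith
  have hD2 : L + δ ≤ 2*L := by linarith
  have hτpos : 0 < L + a + δ := by linarith
  have hηpos : 0 < η := by nlinarith [sq_nonneg δ]
  have hδsq : δ^2 ≤ (1/3)*δ := by nlinarith
  have hη3 : η ≤ 3 := by linarith
  have hE1 := (abs_le.mp hE).1
  have hE2 := (abs_le.mp hE).2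
  have hE'2 := (abs_le.mp hE').2
  have hC₀8 : 8 ≤ C₀ := by linarith
  have hy_lb : -(1/2) ≤ a/(L+δ) := by
    rw [le_div_iff₀ hDpos]; linarith
  have h1y : 0 < 1 + a/(L+δ) := by linarith
  have h1x : 0 < 1 + δ/L := by positivity
  have hsplit1 : Real.log (L + a + δ) = Real.log (L+δ) + Real.log (1 + a/(L+δ)) := by
    rw [← Real.log_mul hDpos.ne' h1y.ne']
    congr 1
    field_simp; ring
  have hsplit2 : Real.log (L + δ) = Real.log L + Real.log (1 + δ/L) := by
    rw [← Real.log_mul hLpos.ne' h1x.ne']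
    congr 1
    field_simp
  have hlogx : Real.log (1 + δ/L) ≤ δ/L := by
    have := Real.log_le_sub_one_of_pos h1x; linarith
  have hlogy : a/(L+δ) - 2*(a/(L+δ))^2 ≤ Real.log (1 + a/(L+δ)) := log_lb hy_lb
  have hb2 : (1-η) * Real.log (1 + a/(L+δ)) ≤ (1-η) * (a/(L+δ) - 2*(a/(L+δ))^2) :=
    mul_le_mul_of_nonpos_left hlogy (by linarith)
  -- polynomial bounds
  have hC₀sqeq : C₀^2 = 64*(1+C₁+A)^2 := by rw [hC₀]; ring
  have hC₀sq : 64*(1+C₁)^2 + 64*a^2 ≤ C₀^2 := by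
    have hpm : (0:ℝ) ≤ (1+C₁)*A := mul_nonneg (by linarith) haabs
    linarith [hC₀sqeq, hA2, hpm, sq_nonneg A]
  have hq1 : (L+δ)*(C₁/L) ≤ 2*C₁ := by
    rw [mul_div_assoc', div_le_iff₀ hLpos]
    linarith [mul_nonneg (by linarith : (0:ℝ) ≤ L - δ) hC₁.le]
  have hEprod : -(2*C₁) ≤ (L+δ)*E := by
    have f := mul_le_mul_of_nonneg_left hE1 hDpos.le
    linarith [f, hq1]
  have hq2 : η*L*(C₁/(L+δ)) ≤ 3*C₁ := by
    rw [mul_div_assoc', div_le_iff₀ hDpos]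
    linarith [mul_nonneg (mul_nonneg (by linarith : (0:ℝ) ≤ 3 - η) hLpos.le) hC₁.le,
      mul_nonneg hδpos.le hC₁.le]
  have hE'prod : η*E'*L ≤ 3*C₁ := by
    have f := mul_le_mul_of_nonneg_left hE'2 (mul_pos hηpos hLpos).le
    have f' : η*L*E' ≤ η*L*(C₁/(L+δ)) := f
    linarith [f', hq2]
  -- bracket bound
  have f1 : L*(1+δ+δ^2/4) ≤ L*η := mul_le_mul_of_nonneg_left hη1 hLpos.le
  have f2 : δ*(8*(δ+1+A)) ≤ δ*(L*δ) := mul_le_mul_of_nonneg_left hLδ hδpos.le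
  have f3 : δ*(-A) ≤ δ*a := mul_le_mul_of_nonneg_left hana hδpos.le
  have hB : C₀^2/8 - 5*C₁ ≤ (L+δ)*(a-1+E-δ) + ((η-1)*a - η*(a-1+E'))*L := by
    linarith [f1, f2, f3, hEprod, hE'prod, hδL]
  have hBnn : (0:ℝ) ≤ C₀^2/8 - 5*C₁ := by
    linarith [hC₀sq, sq_nonneg a, sq_nonneg C₁]
  have h1 : L^2*(C₀^2/8 - 5*C₁) ≤ L*(L+δ)*((L+δ)*(a-1+E-δ) + ((η-1)*a - η*(a-1+E'))*L) := by
    have g1 := mul_le_mul_of_nonneg_left hB (mul_pos hLpos hDpos).le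
    have g2 : (0:ℝ) ≤ (L*δ)*(C₀^2/8 - 5*C₁) := mul_nonneg (mul_nonneg hLpos.le hδpos.le) hBnn
    linarith [g1, g2]
  have hη49 : η - 1 ≤ 4/9 := by linarith
  have h2a : 2*(η-1)*a^2 ≤ C₀^2/72 := by
    linarith [mul_nonneg (by linarith : (0:ℝ) ≤ 8/9 - 2*(η-1)) (sq_nonneg a),
      hC₀sq, sq_nonneg (1+C₁)]
  have h2 : 2*(η-1)*a^2*L^2 ≤ (C₀^2/72)*L^2 := by
    have := mul_le_mul_of_nonneg_right h2a (sq_nonneg L)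
    linarith
  have h3 : (L+δ)^2 ≤ 4*L^2 := by
    linarith [mul_nonneg (by linarith : (0:ℝ) ≤ L - δ) (by linarith : (0:ℝ) ≤ 3*L + δ)]
  have hc9 : (0:ℝ) ≤ C₀^2/9 - 5*C₁ - 4 := by
    linarith [hC₀sq, sq_nonneg a, sq_nonneg C₁]
  have hnum : (0:ℝ) ≤ L*(L+δ)*((L+δ)*(a-1+E-δ) + ((η-1)*a - η*(a-1+E'))*L)
      - 2*(η-1)*a^2*L^2 - (L+δ)^2 := by
    linarith [h1, h2, h3, mul_nonneg (sq_nonneg L) hc9]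
  have key : (1/L)*(a-1+E) - (δ/L + (1-η)*(a/(L+δ) - 2*(a/(L+δ))^2) + η/(L+δ)*(a-1+E') + 1/L^2)
      = (L*(L+δ)*((L+δ)*(a-1+E-δ) + ((η-1)*a - η*(a-1+E'))*L)
          - 2*(η-1)*a^2*L^2 - (L+δ)^2) / (L^2 * (L+δ)^2) := by
    field_simp
    ring
  have hMain : δ/L + (1-η)*(a/(L+δ) - 2*(a/(L+δ))^2) + η/(L+δ)*(a-1+E') + 1/L^2
      ≤ (1/L)*(a-1+E) := by
    linarith [key, div_nonneg hnum (by positivity : (0:ℝ) ≤ L^2 * (L+δ)^2)]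
  rw [hsplit1, hsplit2]
  linarith [hlogx, hb2, hMain]

/-- Tail truncation in the saddle-point argument: if `𝒩_x` is non-increasing with
values in `[0,1]` and its moments satisfy
`k ∫₀^∞ t^{k−1} 𝒩_x(t) dt = (log k)^k exp((k/log k)(A₀ − 1 + O(1/log k)))` for
`k₁ ≤ k ≤ K`, then with `κ = e^{τ−A₀}` and `δ = C₀/√(log κ)` (for a suitable `C₀`),
provided `κ` and `κ e^δ` lie in the admissible range,
`∫_{τ+δ}^∞ t^{κ−1} 𝒩_x(t) dt ≤ (∫₀^∞ t^{κ−1} 𝒩_x(t) dt) · exp(−κ/(log κ)²)`. -/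
theorem stmt_16 : ∀ C₁ > (0 : ℝ), ∃ C₀ > (0 : ℝ), ∃ k₁ : ℝ, ∀ K : ℝ, ∀ N : ℝ → ℝ,
    (∀ t : ℝ, 0 ≤ N t ∧ N t ≤ 1) →
    (∀ s t : ℝ, 0 ≤ s → s ≤ t → N t ≤ N s) →
    (∀ k : ℝ, k₁ ≤ k → k ≤ K → ∃ E : ℝ, |E| ≤ C₁ / Real.log k ∧
      k * ∫ t in Set.Ioi (0 : ℝ), t ^ (k - 1) * N t =
        (Real.log k) ^ k * Real.exp (k / Real.log k * (A0 - 1 + E))) →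
    ∀ τ κ : ℝ, κ = Real.exp (τ - A0) → k₁ ≤ κ →
      κ * Real.exp (C₀ / Real.sqrt (Real.log κ)) ≤ K →
      (∫ t in Set.Ioi (τ + C₀ / Real.sqrt (Real.log κ)), t ^ (κ - 1) * N t) ≤
        (∫ t in Set.Ioi (0 : ℝ), t ^ (κ - 1) * N t) *
          Real.exp (-κ / (Real.log κ) ^ 2) := by
  intro C₁ hC₁
  have hA0 : 0 ≤ |A0| := abs_nonneg _
  set C₀ : ℝ := 8*(1+C₁+|A0|) with hC₀def
  have hC₀pos : 0 < C₀ := by rw [hC₀def]; linarith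
  have hC₀8 : 8 ≤ C₀ := by rw [hC₀def]; linarith
  refine ⟨C₀, hC₀pos, Real.exp ((3*C₀+|A0|+9)^2), ?_⟩
  intro K N hN01 hmono hmom τ κ hκ hk₁ hK
  have hκpos : 0 < κ := by rw [hκ]; exact Real.exp_pos _
  have hlogκ : Real.log κ = τ - A0 := by rw [hκ, Real.log_exp]
  set L := Real.log κ with hLdef
  have hLge : (3*C₀+|A0|+9)^2 ≤ L := by
    rw [hLdef]; exact (Real.le_log_iff_exp_le hκpos).mpr hk₁
  have h33 : 33 ≤ 3*C₀+|A0|+9 := by linarith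
  have hLpos : 0 < L := by nlinarith [hLge, h33]
  set s := Real.sqrt L with hsdef
  have hspos : 0 < s := Real.sqrt_pos.mpr hLpos
  have hs2 : s^2 = L := Real.sq_sqrt hLpos.le
  have hsge : 3*C₀+|A0|+9 ≤ s := by
    rw [hsdef]
    have h := Real.sqrt_le_sqrt hLge
    rwa [Real.sqrt_sq (by linarith)] at h
  have hs33 : 33 ≤ s := by linarith
  set δ := C₀ / s with hδdef
  have hδpos : 0 < δ := div_pos hC₀pos hspos
  have hδ3 : δ ≤ 1/3 := by rw [hδdef, div_le_iff₀ hspos]; linarith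
  have hδL : δ^2 * L = C₀^2 := by
    rw [hδdef, ← hs2]; field_simp
  have hL33 : 33*(3*C₀+|A0|+9) ≤ L := by
    have hkey : s*(3*C₀+|A0|+9) ≤ s*s := mul_le_mul_of_nonneg_left hsge hspos.le
    have hkey2 : 33*(3*C₀+|A0|+9) ≤ s*(3*C₀+|A0|+9) :=
      mul_le_mul_of_nonneg_right hs33 (by linarith)
    nlinarith [hs2]
  have hL1 : 1 ≤ L := by linarith
  have hLbig : 2*|A0| + 2 ≤ L := by linarith
  have hLδ : 8*(δ + 1 + |A0|) ≤ L * δ := by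
    have hLδeq : L * δ = s * C₀ := by
      rw [hδdef]
      rw [eq_comm, mul_comm s C₀, mul_div_assoc', eq_div_iff hspos.ne']
      linear_combination C₀ * hs2
    rw [hLδeq]
    have hsC₀ : 8*s ≤ s*C₀ := by
      nlinarith [mul_nonneg hspos.le (show (0:ℝ) ≤ C₀-8 by linarith)]
    linarith
  set η := Real.exp δ with hηdef
  have hη1 : 1 + δ + δ^2/4 ≤ η := exp_sq_lb hδpos.le
  have hη2 : η ≤ 1 + δ + δ^2 := exp_ub hδpos.le hδ3
  have hηge1 : 1 ≤ η := by nlinarith [sq_nonneg δ]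
  have hηpos : 0 < η := by linarith
  set K' := κ * η with hK'def
  have hκK' : κ ≤ K' := by
    rw [hK'def]
    nlinarith [mul_le_mul_of_nonneg_left hηge1 hκpos.le]
  have hK'pos : 0 < K' := lt_of_lt_of_le hκpos hκK'
  have hlogK' : Real.log K' = L + δ := by
    rw [hK'def, Real.log_mul hκpos.ne' (by positivity), hηdef, Real.log_exp]
  have hκK : κ ≤ K := le_trans hκK' hK
  obtain ⟨E, hE, hmκ⟩ := hmom κ hk₁ hκK
  rw [← hLdef] at hE hmκ
  obtain ⟨E', hE', hmK'⟩ := hmom K' (le_trans hk₁ hκK') hK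
  rw [hlogK'] at hE' hmK'
  have hDpos : 0 < L + δ := by linarith
  -- values of the moments
  have hIval : (∫ t in Set.Ioi (0:ℝ), t ^ (κ-1) * N t)
      = Real.exp (Real.log L * κ + κ/L*(A0-1+E)) / κ := by
    rw [eq_div_iff hκpos.ne', Real.exp_add, ← Real.rpow_def_of_pos hLpos]
    linarith [hmκ]
  have hI'val : (∫ t in Set.Ioi (0:ℝ), t ^ (K'-1) * N t)
      = Real.exp (Real.log (L+δ) * K' + K'/(L+δ)*(A0-1+E')) / K' := by
    rw [eq_div_iff hK'pos.ne', Real.exp_add, ← Real.rpow_def_of_pos hDpos]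
    linarith [hmK']
  have hIint : MeasureTheory.IntegrableOn (fun t => t ^ (κ-1) * N t) (Set.Ioi (0:ℝ)) := by
    by_contra hcon
    have h0 : (∫ t in Set.Ioi (0:ℝ), t ^ (κ-1) * N t) = 0 := MeasureTheory.integral_undef hcon
    rw [h0] at hIval
    have hp : (0:ℝ) < Real.exp (Real.log L * κ + κ/L*(A0-1+E)) / κ :=
      div_pos (Real.exp_pos _) hκpos
    linarith
  have hI'int : MeasureTheory.IntegrableOn (fun t => t ^ (K'-1) * N t) (Set.Ioi (0:ℝ)) := by
    by_contra hcon
    have h0 : (∫ t in Set.Ioi (0:ℝ), t ^ (K'-1) * N t) = 0 := MeasureTheory.integral_undef hcon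
    rw [h0] at hI'val
    have hp : (0:ℝ) < Real.exp (Real.log (L+δ) * K' + K'/(L+δ)*(A0-1+E')) / K' :=
      div_pos (Real.exp_pos _) hK'pos
    linarith
  -- rewrite the truncation point
  have hLτ : L = τ - A0 := hlogκ
  clear_value K' η δ s L
  have hττ : τ + δ = L + A0 + δ := by linarith
  rw [hττ]
  have hτ01 : 1 ≤ L + A0 + δ := by linarith [neg_abs_le A0]
  have hτ0pos : (0:ℝ) < L + A0 + δ := by linarith
  have hsub : Set.Ioi (L+A0+δ) ⊆ Set.Ioi (0:ℝ) := Set.Ioi_subset_Ioi (by linarith)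
  have hpt : ∀ t ∈ Set.Ioi (L+A0+δ),
      t ^ (κ-1) * N t ≤ (L+A0+δ) ^ (κ-K') * (t ^ (K'-1) * N t) := by
    intro t ht
    have ht' : L+A0+δ < t := ht
    have ht0 : 0 < t := by linarith
    have hsplit : t ^ (κ-1) = t ^ (κ-K') * t ^ (K'-1) := by
      rw [show κ-1 = (κ-K') + (K'-1) by ring, Real.rpow_add ht0]
    have hcmp : t ^ (κ-K') ≤ (L+A0+δ) ^ (κ-K') :=
      Real.rpow_le_rpow_of_nonpos hτ0pos (le_of_lt ht') (by linarith)
    calc t ^ (κ-1) * N t = t ^ (κ-K') * (t ^ (K'-1) * N t) := by rw [hsplit]; ring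
      _ ≤ (L+A0+δ) ^ (κ-K') * (t ^ (K'-1) * N t) :=
          mul_le_mul_of_nonneg_right hcmp
            (mul_nonneg (Real.rpow_nonneg ht0.le _) (hN01 t).1)
  calc (∫ t in Set.Ioi (L+A0+δ), t ^ (κ-1) * N t)
      ≤ ∫ t in Set.Ioi (L+A0+δ), (L+A0+δ) ^ (κ-K') * (t ^ (K'-1) * N t) :=
        MeasureTheory.setIntegral_mono_on (hIint.mono_set hsub)
          ((hI'int.mono_set hsub).const_mul _) measurableSet_Ioi hpt
    _ = (L+A0+δ) ^ (κ-K') * ∫ t in Set.Ioi (L+A0+δ), t ^ (K'-1) * N t :=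
        MeasureTheory.integral_const_mul _ _
    _ ≤ (L+A0+δ) ^ (κ-K') * ∫ t in Set.Ioi (0:ℝ), t ^ (K'-1) * N t := by
        refine mul_le_mul_of_nonneg_left ?_ (Real.rpow_nonneg hτ0pos.le _)
        refine MeasureTheory.setIntegral_mono_set hI'int ?_ (HasSubset.Subset.eventuallyLE hsub)
        filter_upwards [MeasureTheory.ae_restrict_mem measurableSet_Ioi] with t ht
        exact mul_nonneg (Real.rpow_nonneg (le_of_lt ht) _) (hN01 t).1
    _ ≤ (∫ t in Set.Ioi (0:ℝ), t ^ (κ-1) * N t) * Real.exp (-κ / L^2) := by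
        have lhs_eq : (L+A0+δ) ^ (κ-K') * (∫ t in Set.Ioi (0:ℝ), t ^ (K'-1) * N t)
            = Real.exp (Real.log (L+A0+δ) * (κ-K')
                + (Real.log (L+δ) * K' + K'/(L+δ)*(A0-1+E'))) / K' := by
          rw [hI'val, Real.rpow_def_of_pos hτ0pos,
            Real.exp_add (Real.log (L+A0+δ) * (κ-K'))
              (Real.log (L+δ) * K' + K'/(L+δ)*(A0-1+E'))]
          exact (mul_div_assoc _ _ _).symm
        have rhs_eq : (∫ t in Set.Ioi (0:ℝ), t ^ (κ-1) * N t) * Real.exp (-κ / L^2)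
            = Real.exp ((Real.log L * κ + κ/L*(A0-1+E)) + (-κ/L^2)) / κ := by
          rw [hIval, Real.exp_add (Real.log L * κ + κ/L*(A0-1+E)) (-κ/L^2)]
          exact div_mul_eq_mul_div _ _ _
        rw [lhs_eq, rhs_eq]
        have hcore := core A0 C₁ C₀ L E E' δ η hC₁ hC₀def hδL hδpos hδ3 hη1 hη2 hLδ hL1 hLbig hE hE'
        have hmul := mul_le_mul_of_nonneg_left hcore hκpos.le
        refine div_le_div₀ (Real.exp_pos _).le (Real.exp_le_exp.mpr ?_) hκpos hκK'
        rw [hK'def]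
        refine le_trans (le_of_eq (by ring)) (le_trans (sub_le_sub_right hmul (κ*(1/L^2)))
          (le_of_eq (by ring)))
end

section
/- Uniformly for real k > 0 and large x, ∫₂^x (t/log t)^k dt = x^{k+1}/((k+1)(log x)^k) · (1 + O(1/log x)), with an absolute implied constant (uniform in k). -/
/-!
With `g t = (t / log t) ^ k` and `M t = t ^ (k + 1) / ((k + 1) (log t) ^ k)` one has
`M' = g - k / (k + 1) · g / log t`, so `∫_y^x g = M x - M y + O(∫_y^x g / log t)`.
Taking `y = √x`, we have `log t ≥ (log x) / 2` on `[y, x]`, so the error term is at most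
`2 / log x` times the integral itself, while `M y` and `∫_2^y g` are both at most
`y ^ (k + 1) ≤ M x / log x`. None of these estimates depends on `k`.
-/

open Real Set intervalIntegral

noncomputable def mainTerm (k t : ℝ) : ℝ := t ^ (k + 1) / ((k + 1) * log t ^ k)

lemma hasDerivAt_mainTerm {k t : ℝ} (hk : k + 1 ≠ 0) (ht : 1 < t) :
    HasDerivAt (mainTerm k) ((t / log t) ^ k - k / (k + 1) * ((t / log t) ^ k / log t)) t := by
  have ht0 : 0 < t := by linarith
  have hlog : 0 < log t := log_pos ht
  have hnum := hasDerivAt_rpow_const (p := k + 1) (Or.inl ht0.ne')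
  have hden := ((hasDerivAt_log ht0.ne').rpow_const (p := k) (Or.inl hlog.ne')).const_mul (k + 1)
  refine (hnum.div hden (by positivity)).congr_deriv ?_
  rw [div_rpow ht0.le hlog.le, add_sub_cancel_right, rpow_add_one ht0.ne', rpow_sub_one hlog.ne']
  field_simp

lemma continuousOn_log_Ioi_one : ContinuousOn log (Ioi 1) :=
  continuousOn_log.mono fun t (ht : 1 < t) => (zero_lt_one.trans ht).ne'

lemma continuousOn_div_log_rpow {k : ℝ} (hk : 0 ≤ k) :
    ContinuousOn (fun t => (t / log t) ^ k) (Ioi 1) :=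
  (continuousOn_id.div continuousOn_log_Ioi_one fun _ ht => (log_pos ht).ne').rpow_const
    fun _ _ => Or.inr hk

lemma continuousOn_div_log_rpow_div_log {k : ℝ} (hk : 0 ≤ k) :
    ContinuousOn (fun t => (t / log t) ^ k / log t) (Ioi 1) :=
  (continuousOn_div_log_rpow hk).div continuousOn_log_Ioi_one fun _ ht => (log_pos ht).ne'

lemma ContinuousOn.intervalIntegrable_of_Ioi {E : Type*} [NormedAddCommGroup E] {f : ℝ → E}
    {c a b : ℝ} (hf : ContinuousOn f (Ioi c)) (ha : c < a) (hb : c < b) :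
    IntervalIntegrable f MeasureTheory.volume a b :=
  (hf.mono fun _ ht => (lt_min ha hb).trans_le ht.1).intervalIntegrable

lemma integral_div_log_rpow_eq {k x y : ℝ} (hk : 0 ≤ k) (hy : 1 < y) (hyx : y ≤ x) :
    ∫ t in y..x, (t / log t) ^ k =
      mainTerm k x - mainTerm k y + k / (k + 1) * ∫ t in y..x, (t / log t) ^ k / log t := by
  have hx : 1 < x := hy.trans_le hyx
  have hg := (continuousOn_div_log_rpow hk).intervalIntegrable_of_Ioi hy hx
  have hh := (continuousOn_div_log_rpow_div_log hk).intervalIntegrable_of_Ioi hy hx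
  have hftc := integral_eq_sub_of_hasDerivAt
    (fun t ht => hasDerivAt_mainTerm (by linarith) (lt_min hy hx |>.trans_le ht.1))
    (hg.sub (hh.const_mul (k / (k + 1))))
  rw [integral_sub hg (hh.const_mul _), integral_const_mul] at hftc
  linarith

lemma div_log_le {t y : ℝ} (ht : 2 ≤ t) (hty : t ≤ y) (hy : 6 ≤ y) : t / log t ≤ y := by
  have hlog2 : 1 / 2 < log t := by
    linarith [log_two_gt_d9, log_le_log (by norm_num) ht]
  rcases le_or_gt t 3 with h3 | h3
  · rw [div_le_iff₀ (by linarith)]; nlinarith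
  · have h1 : 1 ≤ log t := by
      rw [le_log_iff_exp_le (by linarith)]; linarith [exp_one_lt_d9]
    exact (div_le_self (by linarith) h1).trans hty

lemma integral_div_log_rpow_le {k y : ℝ} (hk : 0 ≤ k) (hy : 6 ≤ y) :
    ∫ t in (2 : ℝ)..y, (t / log t) ^ k ≤ y ^ (k + 1) := by
  have hg := (continuousOn_div_log_rpow hk).intervalIntegrable_of_Ioi one_lt_two (by linarith)
  have hbound : ∀ t ∈ Icc 2 y, (t / log t) ^ k ≤ y ^ k := fun t ht =>
    rpow_le_rpow (div_nonneg (by linarith [ht.1]) (log_nonneg (by linarith [ht.1])))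
      (div_log_le ht.1 ht.2 hy) hk
  calc ∫ t in (2 : ℝ)..y, (t / log t) ^ k ≤ ∫ _ in (2 : ℝ)..y, y ^ k :=
        integral_mono_on (by linarith) hg intervalIntegrable_const hbound
    _ = (y - 2) * y ^ k := by rw [integral_const, smul_eq_mul]
    _ ≤ y ^ (k + 1) := by
        rw [rpow_add_one (by linarith)]
        nlinarith [rpow_nonneg (show 0 ≤ y by linarith) k]

lemma mainTerm_le_rpow {k y : ℝ} (hk : 0 ≤ k) (hy : 0 ≤ y) (hlog : 1 ≤ log y) :
    mainTerm k y ≤ y ^ (k + 1) :=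
  div_le_self (rpow_nonneg hy _) (one_le_mul_of_one_le_of_one_le (by linarith)
    (one_le_rpow hlog hk))

lemma integral_div_log_rpow_div_log_le {k x y : ℝ} (hk : 0 ≤ k) (hy : 1 < y) (hyx : y ≤ x) :
    ∫ t in y..x, (t / log t) ^ k / log t ≤ (∫ t in y..x, (t / log t) ^ k) / log y := by
  have hx : 1 < x := hy.trans_le hyx
  rw [← integral_div]
  refine integral_mono_on hyx
    ((continuousOn_div_log_rpow_div_log hk).intervalIntegrable_of_Ioi hy hx)
    (((continuousOn_div_log_rpow hk).intervalIntegrable_of_Ioi hy hx).div_const _) fun t ht => ?_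
  have ht1 : 1 < t := hy.trans_le ht.1
  exact div_le_div_of_nonneg_left
    (rpow_nonneg (div_nonneg (by linarith) (log_pos ht1).le) k) (log_pos hy)
    (log_le_log (by linarith) ht.1)

lemma integral_div_log_rpow_bounds {k x y : ℝ} (hk : 0 ≤ k) (hy : 6 ≤ y) (hyx : y ≤ x) :
    mainTerm k x - y ^ (k + 1) ≤ ∫ t in (2 : ℝ)..x, (t / log t) ^ k ∧
      ∫ t in (2 : ℝ)..x, (t / log t) ^ k ≤
        y ^ (k + 1) + mainTerm k x + (∫ t in (2 : ℝ)..x, (t / log t) ^ k) / log y := by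
  have hy1 : 1 < y := by linarith
  have hlogy : 1 ≤ log y := by
    rw [le_log_iff_exp_le (by linarith)]; linarith [exp_one_lt_d9]
  have hnonneg : ∀ t ∈ Ioi (1 : ℝ), 0 ≤ (t / log t) ^ k := fun t (ht : 1 < t) =>
    rpow_nonneg (div_nonneg (by linarith) (log_pos ht).le) k
  have hhead_int :=
    (continuousOn_div_log_rpow hk).intervalIntegrable_of_Ioi one_lt_two hy1
  have htail_int :=
    (continuousOn_div_log_rpow hk).intervalIntegrable_of_Ioi hy1 (hy1.trans_le hyx)
  have hsplit := integral_add_adjacent_intervals hhead_int htail_int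
  have hhead_nonneg : 0 ≤ ∫ t in (2 : ℝ)..y, (t / log t) ^ k :=
    integral_nonneg (by linarith) fun t ht => hnonneg t (one_lt_two.trans_le ht.1)
  have hhead_le := integral_div_log_rpow_le hk hy
  have hrest_nonneg : 0 ≤ ∫ t in y..x, (t / log t) ^ k / log t :=
    integral_nonneg hyx fun t ht => div_nonneg (hnonneg t (hy1.trans_le ht.1))
      (log_nonneg (by linarith [ht.1]))
  have hrest_le := integral_div_log_rpow_div_log_le hk hy1 hyx
  have htail := integral_div_log_rpow_eq hk hy1 hyx
  have hmain_y_nonneg : 0 ≤ mainTerm k y := div_nonneg (rpow_nonneg (by linarith) _)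
    (mul_nonneg (by linarith) (rpow_nonneg (by linarith) _))
  have hmain_y_le := mainTerm_le_rpow hk (by linarith) hlogy
  have hcoef : k / (k + 1) ≤ 1 := (div_le_one (by linarith)).2 (by linarith)
  have hcoef_nonneg : 0 ≤ k / (k + 1) := div_nonneg hk (by linarith)
  have hrest_tail : (∫ t in y..x, (t / log t) ^ k) / log y ≤
      (∫ t in (2 : ℝ)..x, (t / log t) ^ k) / log y :=
    div_le_div_of_nonneg_right (by linarith) (by linarith)
  constructor
  · linarith [mul_nonneg hcoef_nonneg hrest_nonneg]
  · linarith [mul_le_of_le_one_left hrest_nonneg hcoef]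

lemma add_one_mul_rpow_le_rpow {k L y : ℝ} (hk : 0 ≤ k + 1) (hL : 0 ≤ L) (h : exp 1 * L ≤ y) :
    (k + 1) * L ^ (k + 1) ≤ y ^ (k + 1) :=
  calc (k + 1) * L ^ (k + 1) ≤ exp 1 ^ (k + 1) * L ^ (k + 1) := by
        rw [exp_one_rpow]
        exact mul_le_mul_of_nonneg_right (by linarith [add_one_le_exp (k + 1)])
          (rpow_nonneg hL _)
    _ = (exp 1 * L) ^ (k + 1) := (mul_rpow (exp_pos 1).le hL).symm
    _ ≤ y ^ (k + 1) := rpow_le_rpow (by positivity) h hk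

lemma mul_rpow_le_mul_self_rpow_div {k L y : ℝ} (hk : 0 < k + 1) (hL : 0 < L)
    (h : exp 1 * L ≤ y) :
    L * y ^ (k + 1) ≤ (y * y) ^ (k + 1) / ((k + 1) * L ^ k) := by
  have hy : 0 < y := by nlinarith [exp_pos 1]
  rw [le_div_iff₀ (by positivity), mul_rpow hy.le hy.le]
  have := add_one_mul_rpow_le_rpow hk.le hL.le h
  rw [rpow_add_one hL.ne'] at this
  nlinarith [rpow_pos_of_pos hy (k + 1)]

lemma exp_one_mul_le_exp_half {L : ℝ} (hL : 8 ≤ L) : exp 1 * L ≤ exp (L / 2) := by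
  have hquad := quadratic_le_exp_of_nonneg (show 0 ≤ L / 2 - 1 by linarith)
  have hsplit : exp (L / 2) = exp 1 * exp (L / 2 - 1) := by rw [← exp_add]; ring_nf
  rw [hsplit]
  exact mul_le_mul_of_nonneg_left (by nlinarith) (exp_pos 1).le

lemma abs_div_sub_one_le {L I M Y : ℝ} (hL : 4 ≤ L) (hM : 0 < M) (hY : L * Y ≤ M)
    (hlo : M - Y ≤ I) (hup : I ≤ Y + M + 2 * I / L) : |I / M - 1| ≤ 6 / L := by
  have hL0 : 0 < L := by linarith
  have hYM : Y ≤ M / L := by rw [le_div_iff₀ hL0]; linarith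
  have hI : (L - 2) * I ≤ (L + 1) * M := by
    have h := mul_le_mul_of_nonneg_left hup hL0.le
    rw [mul_add, mul_div_cancel₀ _ hL0.ne'] at h
    nlinarith
  rw [abs_le, div_sub_one hM.ne', le_div_iff₀ hM, div_le_div_iff₀ hM hL0]
  constructor
  · have : 6 / L * M = 6 * (M / L) := by ring
    nlinarith [div_nonneg hM.le hL0.le]
  · nlinarith

/-- Uniformly for real `k > 0` and large `x`,
`∫₂^x (t/log t)^k dt = x^{k+1}/((k+1)(log x)^k) · (1 + O(1/log x))`, with an
absolute implied constant. -/
theorem stmt_19 : ∃ C : ℝ, 0 < C ∧ ∃ x₀ : ℝ, ∀ x : ℝ, x₀ ≤ x → ∀ k : ℝ, 0 < k →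
    ∃ E : ℝ, |E| ≤ C / Real.log x ∧
      ∫ t in (2 : ℝ)..x, (t / Real.log t) ^ k =
        x ^ (k + 1) / ((k + 1) * (Real.log x) ^ k) * (1 + E) := by
  refine ⟨6, by norm_num, exp 8, fun x hx k hk => ?_⟩
  have hx0 : 0 < x := (exp_pos 8).trans_le hx
  set L := log x
  have hL : 8 ≤ L := (le_log_iff_exp_le hx0).2 hx
  set y := exp (L / 2)
  have hxy : x = y * y := by rw [← exp_add, add_halves, exp_log hx0]
  have hyL : exp 1 * L ≤ y := exp_one_mul_le_exp_half hL
  have hy : 6 ≤ y := by nlinarith [add_one_le_exp 1]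
  have hmain : L * y ^ (k + 1) ≤ mainTerm k x :=
    (mul_rpow_le_mul_self_rpow_div (by linarith) (by linarith) hyL).trans_eq (by rw [← hxy]; rfl)
  have hyx : y ≤ x := by rw [hxy]; nlinarith
  obtain ⟨hlo, hup⟩ := integral_div_log_rpow_bounds hk.le hy hyx
  rw [log_exp, div_div_eq_mul_div, mul_comm _ 2] at hup
  have hM : 0 < mainTerm k x := by unfold mainTerm; positivity
  refine ⟨_, abs_div_sub_one_le (by linarith) hM hmain hlo hup, ?_⟩
  change _ = mainTerm k x * _
  rw [add_sub_cancel, mul_div_cancel₀ _ hM.ne']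
end
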